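/- arXiv:math/0606218 — 8 statements merged into one kernel-verified Lean document; each statement's English description precedes it below -/
import Mathlib

section
/- Let λ ∈ (0,1], θ ∈ (0,1) with θ(λ+1) ≤ 1, and set r = 1/(λθ), A = r², B = 2(r + (r-2)/λ), C = (1 - 1/λ)². Define G(w) = ((2-r)w + (1/λ - 1) + √(Aw² - Bw + C))/(2w(w-1)) and K(z) = (z + (2-r) + √((z-r)² + 4z/λ))/(2z), where √ denotes the nonnegative real square root. Then for every real w > 1 one has Aw² - Bw + C ≥ 0, G(w) > 0, and K(G(w)) = w. -/
/-- For `λ ∈ (0,1]`, `θ ∈ (0,1)` with `θ(λ+1) ≤ 1`, with `r = 1/(λθ)`, `A = r²`,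
`B = 2(r + (r-2)/λ)`, `C = (1 - 1/λ)²`, the Cauchy transform
`G(w) = ((2-r)w + (1/λ - 1) + √(Aw² - Bw + C))/(2w(w-1))` and
`K(z) = (z + (2-r) + √((z-r)² + 4z/λ))/(2z)` satisfy, for every real `w > 1`:
`Aw² - Bw + C ≥ 0`, `G(w) > 0`, and `K(G(w)) = w`. -/
theorem stmt_1 (lam θ : ℝ) (hlam0 : 0 < lam) (hlam1 : lam ≤ 1)
    (hθ0 : 0 < θ) (hθ1 : θ < 1) (hθlam : θ * (lam + 1) ≤ 1)
    (r A B C : ℝ)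
    (hr : r = 1 / (lam * θ)) (hA : A = r ^ 2)
    (hB : B = 2 * (r + (r - 2) / lam)) (hC : C = (1 - 1 / lam) ^ 2)
    (G K : ℝ → ℝ)
    (hG : ∀ w : ℝ, G w =
      ((2 - r) * w + (1 / lam - 1) + Real.sqrt (A * w ^ 2 - B * w + C)) / (2 * w * (w - 1)))
    (hK : ∀ z : ℝ, K z =
      (z + (2 - r) + Real.sqrt ((z - r) ^ 2 + 4 * z / lam)) / (2 * z)) :
    ∀ w : ℝ, 1 < w →
      A * w ^ 2 - B * w + C ≥ 0 ∧ G w > 0 ∧ K (G w) = w := by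
  have hlamθ : 0 < lam * θ := mul_pos hlam0 hθ0
  have hhalf : lam * θ ≤ 1 / 2 := by nlinarith [mul_nonneg hθ0.le (sub_nonneg.mpr hlam1)]
  have hr2 : 2 ≤ r := by
    rw [hr, le_div_iff₀ hlamθ]; linarith
  intro w hw
  -- discriminant identity
  have hD : A * w ^ 2 - B * w + C
      = ((r - 2) * w - (1 / lam - 1)) ^ 2 + 4 * (r - 1) * w * (w - 1) := by
    linear_combination w ^ 2 * hA - w * hB + hC
  have hwpos : (0 : ℝ) < w := by linarith
  have hw1 : (0 : ℝ) < w - 1 := by linarith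
  have hDpos : ((r - 2) * w - (1 / lam - 1)) ^ 2 < A * w ^ 2 - B * w + C := by
    rw [hD]
    nlinarith [mul_pos (mul_pos (show (0:ℝ) < r - 1 by linarith) hwpos) hw1]
  have part1 : A * w ^ 2 - B * w + C ≥ 0 := le_trans (sq_nonneg _) hDpos.le
  -- sqrt bound
  have hsqrtgt : |(r - 2) * w - (1 / lam - 1)| < Real.sqrt (A * w ^ 2 - B * w + C) := by
    have := Real.sqrt_lt_sqrt (sq_nonneg ((r - 2) * w - (1 / lam - 1))) hDpos
    rwa [Real.sqrt_sq_eq_abs] at this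
  have hnum : 0 < (2 - r) * w + (1 / lam - 1) + Real.sqrt (A * w ^ 2 - B * w + C) := by
    have h := le_abs_self ((r - 2) * w - (1 / lam - 1))
    linarith
  have hden : (0 : ℝ) < 2 * w * (w - 1) := by positivity
  have part2 : G w > 0 := by
    rw [hG w]; exact div_pos hnum hden
  refine ⟨part1, part2, ?_⟩
  set z := G w with hzdef
  set t := Real.sqrt (A * w ^ 2 - B * w + C) with htdef
  have hz : 2 * w * (w - 1) * z = (2 - r) * w + (1 / lam - 1) + t := by
    rw [hzdef, hG w]
    field_simp
    rw [htdef]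
    ring_nf
  have ht2 : t ^ 2 = A * w ^ 2 - B * w + C := Real.sq_sqrt part1
  have h4 : 4 * w * (w - 1) *
      (w * (w - 1) * z ^ 2 + z * ((r - 2) * w - (1 / lam - 1)) - (r - 1)) = 0 := by
    linear_combination (2 * w * (w - 1) * z + (r - 2) * w - (1 / lam - 1) + t) * hz
      + ht2 + w ^ 2 * hA - w * hB + hC
  have key : w * (w - 1) * z ^ 2 + z * ((r - 2) * w - (1 / lam - 1)) = r - 1 := by
    have h40 : (4 * w * (w - 1)) ≠ 0 := by positivity
    have := (mul_eq_zero.mp h4).resolve_left h40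
    linarith
  have hE : (z - r) ^ 2 + 4 * z / lam = (z * (2 * w - 1) + (r - 2)) ^ 2 := by
    linear_combination (-4 : ℝ) * key
  have hzpos : 0 < z := part2
  have hpos2 : 0 ≤ z * (2 * w - 1) + (r - 2) := by nlinarith
  rw [hK, hE, Real.sqrt_sq hpos2, div_eq_iff (by positivity : (2 : ℝ) * z ≠ 0)]
  ring
end

section
/- Let λ ∈ (0,1), θ ∈ (0,1) with θ(λ+1) < 1, set x_± = (√(θ(1-λθ)) ± √(λθ(1-θ)))² and g(x) = √((x - x_-)(x_+ - x))/(2πλθ·x(1-x)) for x ∈ [x_-, x_+]. Then g ≥ 0 on [x_-, x_+] and ∫_{x_-}^{x_+} g(x) dx = 1; i.e. g is a probability density on [x_-, x_+]. -/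
open Real Set intervalIntegral

lemma mul_sq_h (s t A B : ℝ) (hs : s^2 = A) (ht : t^2 = B) :
    (s-t)^2 * ((s+t)^2) = (A-B)^2 := by
  linear_combination (s^2+A-t^2-B)*hs - (s^2+A-t^2-B)*ht

lemma one_sub_mul_h (s t A B : ℝ) (hs : s^2 = A) (ht : t^2 = B) :
    (1-(s-t)^2) * (1-(s+t)^2) = 1 - 2*(A+B) + (A-B)^2 := by
  linear_combination (-2 + (s^2 - t^2 + A - B))*hs + (-2 - (s^2 - t^2 + A - B))*ht

set_option maxHeartbeats 1000000 in
lemma sfj_key (a b : ℝ) (ha : 0 < a) (hab : a < b) (hb : b < 1) :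
    ∫ x in a..b, Real.sqrt ((x - a) * (b - x)) / (x * (1 - x))
      = Real.pi * (1 - Real.sqrt (a * b) - Real.sqrt ((1 - a) * (1 - b))) := by
  have hb0 : 0 < b := ha.trans hab
  have ha1 : a < 1 := hab.trans hb
  have hr : (0:ℝ) < b - a := by linarith
  set p := Real.sqrt (a * b) with hpdef
  set q := Real.sqrt ((1 - a) * (1 - b)) with hqdef
  have hp2 : p ^ 2 = a * b := Real.sq_sqrt (by positivity)
  have hq2 : q ^ 2 = (1 - a) * (1 - b) := Real.sq_sqrt (by nlinarith)
  have hp : 0 < p := Real.sqrt_pos.mpr (by positivity)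
  have hq : 0 < q := Real.sqrt_pos.mpr (by nlinarith)
  set F : ℝ → ℝ := fun x =>
    Real.arcsin ((2 * x - (a + b)) / (b - a))
      + p * Real.arcsin ((2 * (a * b) - (a + b) * x) / ((b - a) * x))
      + q * Real.arcsin ((2 * ((1 - a) * (1 - b)) - (a + b - 2) * (x - 1)) / ((b - a) * (x - 1)))
    with hF
  have hcont : ContinuousOn F (Set.Icc a b) := by
    apply ContinuousOn.add
    apply ContinuousOn.add
    · exact (Real.continuous_arcsin.comp (by fun_prop (disch := positivity))).continuousOn
    · refine continuousOn_const.mul (Real.continuous_arcsin.comp_continuousOn ?_)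
      refine ContinuousOn.div (by fun_prop) (by fun_prop) ?_
      intro x hx
      have : 0 < x := lt_of_lt_of_le ha hx.1
      positivity
    · refine continuousOn_const.mul (Real.continuous_arcsin.comp_continuousOn ?_)
      refine ContinuousOn.div (by fun_prop) (by fun_prop) ?_
      intro x hx
      have hx1 : x < 1 := lt_of_le_of_lt hx.2 hb
      have : x - 1 < 0 := by linarith
      exact mul_ne_zero hr.ne' this.ne
  have hint : IntervalIntegrable (fun x => Real.sqrt ((x - a) * (b - x)) / (x * (1 - x)))
      MeasureTheory.volume a b := by
    apply ContinuousOn.intervalIntegrable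
    rw [Set.uIcc_of_le hab.le]
    refine ContinuousOn.div (by fun_prop) (by fun_prop) ?_
    intro x hx
    have h0 : 0 < x := lt_of_lt_of_le ha hx.1
    have h1 : x < 1 := lt_of_le_of_lt hx.2 hb
    have : 0 < 1 - x := by linarith
    positivity
  have hderiv : ∀ x ∈ Set.Ioo a b,
      HasDerivWithinAt F (Real.sqrt ((x - a) * (b - x)) / (x * (1 - x))) (Set.Ioi x) x := by
    intro x hx
    obtain ⟨hxa, hxb⟩ := hx
    have hx0 : 0 < x := ha.trans hxa
    have hx1 : x < 1 := hxb.trans hb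
    have hx1' : 0 < 1 - x := by linarith
    set S := Real.sqrt ((x - a) * (b - x)) with hSdef
    have hS2 : S ^ 2 = (x - a) * (b - x) := Real.sq_sqrt (by nlinarith)
    have hS : 0 < S := Real.sqrt_pos.mpr (by nlinarith)
    clear_value S
    -- term 1
    have h1u2 : 1 - ((2 * x - (a + b)) / (b - a)) ^ 2 = (2 * S / (b - a)) ^ 2 := by
      field_simp
      linear_combination (-4:ℝ) * hS2
    have hu1 : ((2 * x - (a + b)) / (b - a)) ≠ 1 := by
      intro h
      have h2 : (1:ℝ) - ((2 * x - (a + b)) / (b - a)) ^ 2 = 0 := by rw [h]; ring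
      rw [h1u2] at h2
      have : (0:ℝ) < (2 * S / (b - a)) ^ 2 := by positivity
      linarith
    have hu1' : ((2 * x - (a + b)) / (b - a)) ≠ -1 := by
      intro h
      have h2 : (1:ℝ) - ((2 * x - (a + b)) / (b - a)) ^ 2 = 0 := by rw [h]; ring
      rw [h1u2] at h2
      have : (0:ℝ) < (2 * S / (b - a)) ^ 2 := by positivity
      linarith
    have hu_in : HasDerivAt (fun y : ℝ => (2 * y - (a + b)) / (b - a)) (2 / (b - a)) x := by
      have := (((hasDerivAt_id x).const_mul 2).sub_const (a + b)).div_const (b - a)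
      simpa using this
    have hT1 : HasDerivAt (fun y : ℝ => Real.arcsin ((2 * y - (a + b)) / (b - a))) (1 / S) x := by
      have h := (Real.hasDerivAt_arcsin hu1' hu1).comp x hu_in
      have hsq : Real.sqrt (1 - ((2 * x - (a + b)) / (b - a)) ^ 2) = 2 * S / (b - a) := by
        rw [h1u2]; exact Real.sqrt_sq (by positivity)
      refine h.congr_deriv ?_
      rw [hsq]
      field_simp
    -- term 2
    have h1v2 : 1 - ((2 * (a * b) - (a + b) * x) / ((b - a) * x)) ^ 2
        = (2 * p * S / ((b - a) * x)) ^ 2 := by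
      field_simp
      linear_combination (-4 * S^2) * hp2 + (-4 * a * b) * hS2
    have hv1 : ((2 * (a * b) - (a + b) * x) / ((b - a) * x)) ≠ 1 := by
      intro h
      have h2 : (1:ℝ) - ((2 * (a * b) - (a + b) * x) / ((b - a) * x)) ^ 2 = 0 := by rw [h]; ring
      rw [h1v2] at h2
      have : (0:ℝ) < (2 * p * S / ((b - a) * x)) ^ 2 := by positivity
      linarith
    have hv1' : ((2 * (a * b) - (a + b) * x) / ((b - a) * x)) ≠ -1 := by
      intro h
      have h2 : (1:ℝ) - ((2 * (a * b) - (a + b) * x) / ((b - a) * x)) ^ 2 = 0 := by rw [h]; ring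
      rw [h1v2] at h2
      have : (0:ℝ) < (2 * p * S / ((b - a) * x)) ^ 2 := by positivity
      linarith
    have hv_in : HasDerivAt (fun y : ℝ => (2 * (a * b) - (a + b) * y) / ((b - a) * y))
        ((-(a + b) * ((b - a) * x) - (2 * (a * b) - (a + b) * x) * (b - a)) / ((b - a) * x) ^ 2)
        x := by
      have hnum : HasDerivAt (fun y : ℝ => 2 * (a * b) - (a + b) * y) (-(a + b)) x := by
        have := (hasDerivAt_const x (2 * (a * b))).sub ((hasDerivAt_id x).const_mul (a + b))
        exact this.congr_deriv (by ring)
      have hden : HasDerivAt (fun y : ℝ => (b - a) * y) (b - a) x := by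
        have := (hasDerivAt_id x).const_mul (b - a)
        simpa using this
      exact hnum.div hden (by positivity)
    have hT2 : HasDerivAt (fun y : ℝ => p * Real.arcsin ((2 * (a * b) - (a + b) * y) / ((b - a) * y)))
        (-(a * b) / (x * S)) x := by
      have h := ((Real.hasDerivAt_arcsin hv1' hv1).comp x hv_in).const_mul p
      have hsq : Real.sqrt (1 - ((2 * (a * b) - (a + b) * x) / ((b - a) * x)) ^ 2)
          = 2 * p * S / ((b - a) * x) := by
        rw [h1v2]; exact Real.sqrt_sq (by positivity)
      refine h.congr_deriv ?_
      rw [hsq]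
      field_simp
      ring
    -- term 3
    have h1w2 : 1 - ((2 * ((1 - a) * (1 - b)) - (a + b - 2) * (x - 1)) / ((b - a) * (x - 1))) ^ 2
        = (2 * q * S / ((b - a) * (1 - x))) ^ 2 := by
      have hDne : ((b - a) * (x - 1)) ^ 2 ≠ 0 := by
        have : x - 1 ≠ 0 := by intro h; nlinarith
        positivity
      have hnum : (2 * ((1 - a) * (1 - b)) - (a + b - 2) * (x - 1)) ^ 2 + (2 * q * S) ^ 2
          = ((b - a) * (x - 1)) ^ 2 := by
        linear_combination (4 * S ^ 2) * hq2 + (4 * (1 - a) * (1 - b)) * hS2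
      rw [div_pow, div_pow, show ((b - a) * (1 - x)) ^ 2 = ((b - a) * (x - 1)) ^ 2 by ring,
        eq_div_iff hDne, sub_mul, div_mul_cancel₀ _ hDne, one_mul]
      linear_combination -hnum
    have hw1 : ((2 * ((1 - a) * (1 - b)) - (a + b - 2) * (x - 1)) / ((b - a) * (x - 1))) ≠ 1 := by
      intro h
      have h2 : (1:ℝ) - ((2 * ((1 - a) * (1 - b)) - (a + b - 2) * (x - 1)) / ((b - a) * (x - 1))) ^ 2 = 0 := by rw [h]; ring
      rw [h1w2] at h2
      have : (0:ℝ) < (2 * q * S / ((b - a) * (1 - x))) ^ 2 := by positivity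
      linarith
    have hw1' : ((2 * ((1 - a) * (1 - b)) - (a + b - 2) * (x - 1)) / ((b - a) * (x - 1))) ≠ -1 := by
      intro h
      have h2 : (1:ℝ) - ((2 * ((1 - a) * (1 - b)) - (a + b - 2) * (x - 1)) / ((b - a) * (x - 1))) ^ 2 = 0 := by rw [h]; ring
      rw [h1w2] at h2
      have : (0:ℝ) < (2 * q * S / ((b - a) * (1 - x))) ^ 2 := by positivity
      linarith
    have hw_in : HasDerivAt (fun y : ℝ => (2 * ((1 - a) * (1 - b)) - (a + b - 2) * (y - 1)) / ((b - a) * (y - 1)))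
        ((-(a + b - 2) * ((b - a) * (x - 1)) - (2 * ((1 - a) * (1 - b)) - (a + b - 2) * (x - 1)) * (b - a)) / ((b - a) * (x - 1)) ^ 2)
        x := by
      have hnum : HasDerivAt (fun y : ℝ => 2 * ((1 - a) * (1 - b)) - (a + b - 2) * (y - 1)) (-(a + b - 2)) x := by
        have := (hasDerivAt_const x (2 * ((1 - a) * (1 - b)))).sub
          (((hasDerivAt_id x).sub_const 1).const_mul (a + b - 2))
        exact this.congr_deriv (by ring)
      have hden : HasDerivAt (fun y : ℝ => (b - a) * (y - 1)) (b - a) x := by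
        have := ((hasDerivAt_id x).sub_const 1).const_mul (b - a)
        simpa using this
      refine hnum.div hden ?_
      have : x - 1 < 0 := by linarith
      exact mul_ne_zero hr.ne' this.ne
    have hT3 : HasDerivAt (fun y : ℝ => q * Real.arcsin ((2 * ((1 - a) * (1 - b)) - (a + b - 2) * (y - 1)) / ((b - a) * (y - 1))))
        (-((1 - a) * (1 - b)) / ((1 - x) * S)) x := by
      have h := ((Real.hasDerivAt_arcsin hw1' hw1).comp x hw_in).const_mul q
      have hsq : Real.sqrt (1 - ((2 * ((1 - a) * (1 - b)) - (a + b - 2) * (x - 1)) / ((b - a) * (x - 1))) ^ 2)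
          = 2 * q * S / ((b - a) * (1 - x)) := by
        rw [h1w2]; exact Real.sqrt_sq (by positivity)
      refine h.congr_deriv ?_
      rw [hsq]
      have hx1ne : x - 1 ≠ 0 := by linarith
      field_simp
      ring
    have htot := (hT1.add hT2).add hT3
    have heq : 1 / S + -(a * b) / (x * S) + -((1 - a) * (1 - b)) / ((1 - x) * S)
        = S / (x * (1 - x)) := by
      field_simp
      linear_combination (-1:ℝ) * hS2
    rw [heq] at htot
    exact htot.hasDerivWithinAt
  have := intervalIntegral.integral_eq_sub_of_hasDeriv_right_of_le hab.le hcont hderiv hint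
  rw [this, hF]
  simp only
  have e1 : (2 * b - (a + b)) / (b - a) = 1 := by
    rw [show 2 * b - (a + b) = b - a by ring]
    exact div_self hr.ne'
  have e2 : (2 * (a * b) - (a + b) * b) / ((b - a) * b) = -1 := by
    rw [show 2 * (a * b) - (a + b) * b = -((b - a) * b) by ring, neg_div]
    rw [div_self (by positivity)]
  have e3 : (2 * ((1 - a) * (1 - b)) - (a + b - 2) * (b - 1)) / ((b - a) * (b - 1)) = -1 := by
    rw [show 2 * ((1 - a) * (1 - b)) - (a + b - 2) * (b - 1) = -((b - a) * (b - 1)) by ring, neg_div]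
    rw [div_self (mul_ne_zero hr.ne' (by linarith : b - 1 ≠ 0))]
  have e4 : (2 * a - (a + b)) / (b - a) = -1 := by
    rw [show 2 * a - (a + b) = -(b - a) by ring, neg_div, div_self hr.ne']
  have e5 : (2 * (a * b) - (a + b) * a) / ((b - a) * a) = 1 := by
    rw [show 2 * (a * b) - (a + b) * a = (b - a) * a by ring]
    exact div_self (by positivity)
  have e6 : (2 * ((1 - a) * (1 - b)) - (a + b - 2) * (a - 1)) / ((b - a) * (a - 1)) = 1 := by
    rw [show 2 * ((1 - a) * (1 - b)) - (a + b - 2) * (a - 1) = (b - a) * (a - 1) by ring]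
    exact div_self (mul_ne_zero hr.ne' (by linarith : a - 1 ≠ 0))
  rw [e1, e2, e3, e4, e5, e6, Real.arcsin_one, Real.arcsin_neg_one]
  ring

set_option maxHeartbeats 1000000 in
/-- For `λ ∈ (0,1)`, `θ ∈ (0,1)` with `θ(λ+1) < 1`, with
`x_± = (√(θ(1-λθ)) ± √(λθ(1-θ)))²` and `g(x) = √((x-x_-)(x_+-x))/(2πλθ·x(1-x))`,
`g` is nonnegative on `[x_-, x_+]` and `∫_{x_-}^{x_+} g(x) dx = 1`. -/
theorem stmt_6 (lam θ : ℝ) (hlam0 : 0 < lam) (hlam1 : lam < 1)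
    (hθ0 : 0 < θ) (hθ1 : θ < 1) (hθlam : θ * (lam + 1) < 1)
    (xp xm : ℝ) (g : ℝ → ℝ)
    (hxp : xp = (Real.sqrt (θ * (1 - lam * θ)) + Real.sqrt (lam * θ * (1 - θ))) ^ 2)
    (hxm : xm = (Real.sqrt (θ * (1 - lam * θ)) - Real.sqrt (lam * θ * (1 - θ))) ^ 2)
    (hg : ∀ x : ℝ, g x =
      Real.sqrt ((x - xm) * (xp - x)) / (2 * Real.pi * lam * θ * x * (1 - x))) :
    (∀ x ∈ Set.Icc xm xp, 0 ≤ g x) ∧ (∫ x in xm..xp, g x) = 1 := by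
  have hA0 : (0:ℝ) < θ * (1 - lam * θ) := by nlinarith
  have hB0 : (0:ℝ) < lam * θ * (1 - θ) := by
    have h1θ : (0:ℝ) < 1 - θ := by linarith
    positivity
  set sA := Real.sqrt (θ * (1 - lam * θ)) with hsAdef
  set sB := Real.sqrt (lam * θ * (1 - θ)) with hsBdef
  have hA2 : sA ^ 2 = θ * (1 - lam * θ) := Real.sq_sqrt hA0.le
  have hB2 : sB ^ 2 = lam * θ * (1 - θ) := Real.sq_sqrt hB0.le
  have hsA : 0 < sA := Real.sqrt_pos.mpr hA0
  have hsB : 0 < sB := Real.sqrt_pos.mpr hB0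
  have hBA : sB < sA := by
    apply Real.sqrt_lt_sqrt hB0.le
    nlinarith
  have hxm0 : 0 < xm := by
    rw [hxm]
    have : 0 < sA - sB := by linarith
    positivity
  have hmp : xm < xp := by rw [hxm, hxp]; nlinarith
  have hxm1 : xm < 1 := by
    rw [hxm]
    nlinarith [hA2]
  have hprod : (1 - xm) * (1 - xp) = (1 - θ * (lam + 1)) ^ 2 := by
    rw [hxm, hxp]
    rw [one_sub_mul_h sA sB _ _ hA2 hB2]
    ring
  have hθlam' : 0 < 1 - θ * (lam + 1) := by linarith
  have hxp1 : xp < 1 := by nlinarith [hprod, hθlam', hxm1]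
  have hmul : xm * xp = (θ * (1 - lam)) ^ 2 := by
    rw [hxm, hxp, mul_sq_h sA sB _ _ hA2 hB2]
    ring
  have hs1 : Real.sqrt (xm * xp) = θ * (1 - lam) := by
    rw [hmul]
    refine Real.sqrt_sq ?_
    have h1l : (0:ℝ) < 1 - lam := by linarith
    positivity
  have hs2 : Real.sqrt ((1 - xm) * (1 - xp)) = 1 - θ * (lam + 1) := by
    rw [hprod]; exact Real.sqrt_sq hθlam'.le
  constructor
  · intro x hx
    rw [hg x]
    apply div_nonneg (Real.sqrt_nonneg _)
    have hx0 : 0 < x := lt_of_lt_of_le hxm0 hx.1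
    have hx1 : 0 < 1 - x := by
      have := lt_of_le_of_lt hx.2 hxp1
      linarith
    positivity
  · have hgc : ∀ x : ℝ, g x
        = (1 / (2 * Real.pi * lam * θ)) * (Real.sqrt ((x - xm) * (xp - x)) / (x * (1 - x))) := by
      intro x
      rw [hg x, show (2 * Real.pi * lam * θ * x * (1 - x))
        = (2 * Real.pi * lam * θ) * (x * (1 - x)) from by ring, ← div_div]
      ring
    calc (∫ x in xm..xp, g x)
        = ∫ x in xm..xp,
            (1 / (2 * Real.pi * lam * θ)) * (Real.sqrt ((x - xm) * (xp - x)) / (x * (1 - x))) := by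
          simp_rw [hgc]
      _ = (1 / (2 * Real.pi * lam * θ))
            * ∫ x in xm..xp, Real.sqrt ((x - xm) * (xp - x)) / (x * (1 - x)) :=
          intervalIntegral.integral_const_mul _ _
      _ = 1 := by
          rw [sfj_key xm xp hxm0 hmp hxp1, hs1, hs2]
          have hπ := Real.pi_pos
          field_simp
          ring
end

section
/- Let λ ∈ (0,1), θ ∈ (0,1) with θ(λ+1) < 1, set r = 1/(λθ), A = r², B = 2(r + (r-2)/λ), C = (1 - 1/λ)², x_± = (√(θ(1-λθ)) ± √(λθ(1-θ)))² and g(x) = √((x - x_-)(x_+ - x))/(2πλθ·x(1-x)). Then for every real w > 1, ∫_{x_-}^{x_+} g(x)/(w - x) dx = ((2-r)w + (1/λ - 1) + √(Aw² - Bw + C))/(2w(w-1)). -/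
set_option maxHeartbeats 1000000

open Real Set intervalIntegral

lemma Jpos {u : ℝ} (hu : 1 < u) :
    ∫ s in (-1:ℝ)..1, Real.sqrt (1 - s ^ 2) / (u - s)
      = Real.pi * (u - Real.sqrt (u ^ 2 - 1)) := by
  have hu2 : (0:ℝ) < u ^ 2 - 1 := by nlinarith
  set v := Real.sqrt (u ^ 2 - 1) with hvdef
  have hv0 : 0 < v := Real.sqrt_pos.2 hu2
  have hv2 : v ^ 2 = u ^ 2 - 1 := Real.sq_sqrt hu2.le
  set F : ℝ → ℝ := fun s => u * Real.arcsin s - Real.sqrt (1 - s ^ 2)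
      - v * Real.arcsin ((u * s - 1) / (u - s)) with hF
  have hderiv : ∀ s ∈ Set.Ioo (-1:ℝ) 1,
      HasDerivAt F (Real.sqrt (1 - s ^ 2) / (u - s)) s := by
    intro s hs
    obtain ⟨hs1, hs2⟩ := hs
    have hus : 0 < u - s := by linarith
    have h1s : 0 < 1 - s ^ 2 := by nlinarith
    set c := Real.sqrt (1 - s ^ 2) with hcdef
    have hc0 : 0 < c := Real.sqrt_pos.2 h1s
    have hc2 : c ^ 2 = 1 - s ^ 2 := Real.sq_sqrt h1s.le
    -- ratio bounds
    have hkey : (u - s) ^ 2 - (u * s - 1) ^ 2 = (u ^ 2 - 1) * (1 - s ^ 2) := by ring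
    have hRlt : (u * s - 1) / (u - s) < 1 := by
      rw [div_lt_one hus]; nlinarith
    have hRgt : -1 < (u * s - 1) / (u - s) := by
      rw [lt_div_iff₀ hus]; nlinarith
    -- derivative pieces
    have d1 : HasDerivAt (fun s : ℝ => u * Real.arcsin s) (u * (1 / Real.sqrt (1 - s ^ 2))) s :=
      (Real.hasDerivAt_arcsin hs1.ne' hs2.ne).const_mul u
    have d2 : HasDerivAt (fun s : ℝ => Real.sqrt (1 - s ^ 2)) (-(2 * s) / (2 * c)) s := by
      have hbase : HasDerivAt (fun s : ℝ => 1 - s ^ 2) (-(2 * s)) s := by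
        simpa using ((hasDerivAt_pow 2 s).const_sub 1)
      simpa [hcdef] using hbase.sqrt (by nlinarith)
    have dR : HasDerivAt (fun s : ℝ => (u * s - 1) / (u - s))
        ((u * (u - s) - (u * s - 1) * (-1)) / (u - s) ^ 2) s := by
      have h1 : HasDerivAt (fun s : ℝ => u * s - 1) u s := by
        simpa using ((hasDerivAt_id s).const_mul u).sub_const 1
      have h2 : HasDerivAt (fun s : ℝ => u - s) (-1) s := by
        simpa using (hasDerivAt_id s).const_sub u
      exact h1.div h2 hus.ne'
    have hsq : Real.sqrt (1 - ((u * s - 1) / (u - s)) ^ 2) = v * c / (u - s) := by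
      have h1 : 1 - ((u * s - 1) / (u - s)) ^ 2 = (v * c / (u - s)) ^ 2 := by
        field_simp
        nlinarith [hv2, hc2]
      rw [h1, Real.sqrt_sq (by positivity)]
    have d3 : HasDerivAt (fun s : ℝ => Real.arcsin ((u * s - 1) / (u - s)))
        ((1 / (v * c / (u - s))) * ((u * (u - s) - (u * s - 1) * (-1)) / (u - s) ^ 2)) s := by
      have := (Real.hasDerivAt_arcsin (ne_of_gt hRgt) (ne_of_lt hRlt)).comp s dR
      simpa [hsq, Function.comp_def] using this
    have dF : HasDerivAt F
        (u * (1 / Real.sqrt (1 - s ^ 2)) - (-(2 * s) / (2 * c))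
          - v * ((1 / (v * c / (u - s))) * ((u * (u - s) - (u * s - 1) * (-1)) / (u - s) ^ 2))) s :=
      (d1.sub d2).sub (d3.const_mul v)
    convert dF using 1
    rw [← hcdef]
    field_simp
    linear_combination (1:ℝ) * hc2
  have hcont : ContinuousOn F (Set.Icc (-1:ℝ) 1) := by
    have h3 : ContinuousOn (fun s : ℝ => (u * s - 1) / (u - s)) (Set.Icc (-1:ℝ) 1) := by
      apply ContinuousOn.div (by fun_prop) (by fun_prop)
      intro x hx
      have : x ≤ 1 := hx.2
      intro h; nlinarith [sub_eq_zero.1 h]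
    apply ContinuousOn.sub
    apply ContinuousOn.sub
    · exact (continuous_const.mul Real.continuous_arcsin).continuousOn
    · fun_prop
    · exact continuousOn_const.mul (Real.continuous_arcsin.comp_continuousOn h3)
  have hint : IntervalIntegrable (fun s => Real.sqrt (1 - s ^ 2) / (u - s))
      MeasureTheory.volume (-1) 1 := by
    apply ContinuousOn.intervalIntegrable
    apply ContinuousOn.div
    · fun_prop
    · fun_prop
    · intro x hx
      rw [Set.uIcc_of_le (by norm_num)] at hx
      have : x ≤ 1 := hx.2
      intro h; nlinarith [sub_eq_zero.1 h]
  rw [intervalIntegral.integral_eq_sub_of_hasDerivAt_of_le (by norm_num) hcont hderiv hint]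
  have e1 : (u * 1 - 1) / (u - 1) = 1 := by
    rw [div_eq_one_iff_eq (by linarith)]; ring
  have e2 : (u * (-1) - 1) / (u - (-1)) = -1 := by
    rw [div_eq_iff (by linarith)]; ring
  simp only [hF, e1, e2, Real.arcsin_one, Real.arcsin_neg_one]
  rw [show (1:ℝ) - 1 ^ 2 = 0 by norm_num, show (1:ℝ) - (-1) ^ 2 = 0 by norm_num,
    Real.sqrt_zero]
  ring

lemma Igt {a b c : ℝ} (hab : a < b) (hbc : b < c) :
    ∫ x in a..b, Real.sqrt ((x - a) * (b - x)) / (c - x)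
      = Real.pi * ((c - (a + b) / 2) - Real.sqrt ((c - a) * (c - b))) := by
  set ρ := (b - a) / 2 with hρdef
  set m := (a + b) / 2 with hmdef
  have hρ : 0 < ρ := by rw [hρdef]; linarith
  set u := (c - m) / ρ with hudef
  have hρu : ρ * u = c - m := by rw [hudef]; field_simp
  have hu : 1 < u := by
    rw [hudef, lt_div_iff₀ hρ]; rw [hρdef, hmdef]; linarith
  have hsub := intervalIntegral.integral_comp_mul_add
    (a := -1) (b := 1) (fun x => Real.sqrt ((x - a) * (b - x)) / (c - x)) hρ.ne' m
  have e1 : ρ * (-1) + m = a := by rw [hρdef, hmdef]; ring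
  have e2 : ρ * 1 + m = b := by rw [hρdef, hmdef]; ring
  rw [e1, e2] at hsub
  have heq : ∀ s : ℝ, Real.sqrt ((ρ * s + m - a) * (b - (ρ * s + m))) / (c - (ρ * s + m))
      = Real.sqrt (1 - s ^ 2) / (u - s) := by
    intro s
    have h1 : (ρ * s + m - a) * (b - (ρ * s + m)) = ρ ^ 2 * (1 - s ^ 2) := by
      rw [hρdef, hmdef]; ring
    have h2 : c - (ρ * s + m) = ρ * (u - s) := by
      rw [mul_sub, hρu]; ring
    rw [h1, h2, Real.sqrt_mul (sq_nonneg ρ), Real.sqrt_sq hρ.le]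
    rw [mul_div_mul_left _ _ hρ.ne']
  simp only [heq] at hsub
  rw [Jpos hu] at hsub
  have : (∫ x in a..b, Real.sqrt ((x - a) * (b - x)) / (c - x))
      = ρ * (Real.pi * (u - Real.sqrt (u ^ 2 - 1))) := by
    rw [hsub]; field_simp
    rw [smul_eq_mul, ← mul_assoc, mul_one_div_cancel hρ.ne', one_mul]
  rw [this]
  have h3 : ρ * Real.sqrt (u ^ 2 - 1) = Real.sqrt ((c - a) * (c - b)) := by
    rw [← Real.sqrt_sq hρ.le, ← Real.sqrt_mul (sq_nonneg ρ)]
    congr 1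
    have : ρ ^ 2 * (u ^ 2 - 1) = (ρ * u) ^ 2 - ρ ^ 2 := by ring
    rw [this, hρu, hρdef, hmdef]; ring
  have h4 : ρ * u = c - m := hρu
  calc ρ * (Real.pi * (u - Real.sqrt (u ^ 2 - 1)))
      = Real.pi * (ρ * u - ρ * Real.sqrt (u ^ 2 - 1)) := by ring
    _ = Real.pi * ((c - (a + b) / 2) - Real.sqrt ((c - a) * (c - b))) := by
        rw [h3, h4, hmdef]

lemma Ilt {a b c : ℝ} (hca : c < a) (hab : a < b) :
    ∫ x in a..b, Real.sqrt ((x - a) * (b - x)) / (c - x)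
      = Real.pi * ((c - (a + b) / 2) + Real.sqrt ((c - a) * (c - b))) := by
  have hrefl := intervalIntegral.integral_comp_sub_left
    (a := a) (b := b) (fun x => Real.sqrt ((x - a) * (b - x)) / (c - x)) (a + b)
  have e1 : a + b - b = a := by ring
  have e2 : a + b - a = b := by ring
  rw [e1, e2] at hrefl
  have heq : ∀ x : ℝ, Real.sqrt ((a + b - x - a) * (b - (a + b - x))) / (c - (a + b - x))
      = -(Real.sqrt ((x - a) * (b - x)) / ((a + b - c) - x)) := by
    intro x
    have h1 : (a + b - x - a) * (b - (a + b - x)) = (x - a) * (b - x) := by ring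
    have h2 : c - (a + b - x) = -((a + b - c) - x) := by ring
    rw [h1, h2, div_neg]
  rw [← hrefl]
  simp only [heq]
  rw [intervalIntegral.integral_neg, Igt hab (by linarith)]
  have h3 : (a + b - c - a) * (a + b - c - b) = (c - a) * (c - b) := by ring
  rw [h3]; ring


private lemma auxLT1 {lam θ : ℝ} (hlam0 : 0 < lam) (hθ0 : 0 < θ)
    (hθlam : θ * (lam + 1) < 1) : lam * θ < 1 := by nlinarith

private lemma aux1TL {lam θ : ℝ} (hlam0 : 0 < lam) (hθ0 : 0 < θ)
    (hθlam : θ * (lam + 1) < 1) : 0 < 1 - θ - lam * θ := by nlinarith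

private lemma auxXM1 {lam θ p q : ℝ} (hlam0 : 0 < lam) (hθ0 : 0 < θ)
    (hθlam : θ * (lam + 1) < 1) (hp0 : 0 < p) (hq0 : 0 < q)
    (e3 : (p - q) ^ 2 = θ * (1 - lam * θ) + lam * θ * (1 - θ) - 2 * (p * q)) :
    (p - q) ^ 2 < 1 := by
  nlinarith [mul_pos hp0 hq0, mul_pos (mul_pos hlam0 hθ0) hθ0]

/-- For `λ ∈ (0,1)`, `θ ∈ (0,1)` with `θ(λ+1) < 1`, with `r = 1/(λθ)`, `A = r²`,
`B = 2(r + (r-2)/λ)`, `C = (1-1/λ)²`, `x_± = (√(θ(1-λθ)) ± √(λθ(1-θ)))²` and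
`g(x) = √((x-x_-)(x_+-x))/(2πλθ·x(1-x))`, one has for every real `w > 1`:
`∫_{x_-}^{x_+} g(x)/(w-x) dx = ((2-r)w + (1/λ-1) + √(Aw² - Bw + C))/(2w(w-1))`. -/
theorem stmt_7 (lam θ : ℝ) (hlam0 : 0 < lam) (hlam1 : lam < 1)
    (hθ0 : 0 < θ) (hθ1 : θ < 1) (hθlam : θ * (lam + 1) < 1)
    (r A B C xp xm : ℝ) (g : ℝ → ℝ)
    (hr : r = 1 / (lam * θ)) (hA : A = r ^ 2)
    (hB : B = 2 * (r + (r - 2) / lam)) (hC : C = (1 - 1 / lam) ^ 2)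
    (hxp : xp = (Real.sqrt (θ * (1 - lam * θ)) + Real.sqrt (lam * θ * (1 - θ))) ^ 2)
    (hxm : xm = (Real.sqrt (θ * (1 - lam * θ)) - Real.sqrt (lam * θ * (1 - θ))) ^ 2)
    (hg : ∀ x : ℝ, g x =
      Real.sqrt ((x - xm) * (xp - x)) / (2 * Real.pi * lam * θ * x * (1 - x))) :
    ∀ w : ℝ, 1 < w →
      (∫ x in xm..xp, g x / (w - x)) =
        ((2 - r) * w + (1 / lam - 1) + Real.sqrt (A * w ^ 2 - B * w + C)) /
          (2 * w * (w - 1)) := by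
  intro w hw
  have hπ : (0:ℝ) < Real.pi := Real.pi_pos
  have hlt1 : lam * θ < 1 := auxLT1 hlam0 hθ0 hθlam
  obtain ⟨p, hpdef⟩ : ∃ x : ℝ, Real.sqrt (θ * (1 - lam * θ)) = x := ⟨_, rfl⟩
  obtain ⟨q, hqdef⟩ : ∃ x : ℝ, Real.sqrt (lam * θ * (1 - θ)) = x := ⟨_, rfl⟩
  rw [hpdef, hqdef] at hxp hxm
  have hp1θ : (0:ℝ) < θ * (1 - lam * θ) := mul_pos hθ0 (by linarith)
  have hp2 : p ^ 2 = θ * (1 - lam * θ) := by rw [← hpdef]; exact Real.sq_sqrt hp1θ.le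
  have hq1θ : (0:ℝ) < lam * θ * (1 - θ) := mul_pos (mul_pos hlam0 hθ0) (by linarith)
  have hq2 : q ^ 2 = lam * θ * (1 - θ) := by rw [← hqdef]; exact Real.sq_sqrt hq1θ.le
  have hp0 : 0 < p := by rw [← hpdef]; exact Real.sqrt_pos.2 hp1θ
  have hq0 : 0 < q := by rw [← hqdef]; exact Real.sqrt_pos.2 hq1θ
  have hqp : q < p := by
    have e : (p - q) * (p + q) = θ * (1 - lam) := by linear_combination hp2 - hq2
    have h1 : 0 < (p - q) * (p + q) := by
      rw [e]; exact mul_pos hθ0 (by linarith)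
    rcases mul_pos_iff.1 h1 with ⟨h2, _⟩ | ⟨_, h3⟩
    · linarith
    · linarith
  have hxm0 : 0 < xm := by rw [hxm]; exact pow_pos (sub_pos.2 hqp) 2
  have hxmlt : xm < xp := by
    rw [hxm, hxp]
    have e : (p + q) ^ 2 - (p - q) ^ 2 = 4 * (p * q) := by ring
    have := mul_pos hp0 hq0
    linarith
  have hsum : xm + xp = 2 * θ + 2 * lam * θ - 4 * lam * θ ^ 2 := by
    rw [hxm, hxp]; linear_combination 2 * hp2 + 2 * hq2
  have hpq : p ^ 2 - q ^ 2 = θ * (1 - lam) := by linear_combination hp2 - hq2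
  have hprod : xm * xp = (θ * (1 - lam)) ^ 2 := by
    rw [hxm, hxp]; linear_combination (p ^ 2 - q ^ 2 + θ * (1 - lam)) * hpq
  have hxm1 : xm < 1 := by
    rw [hxm]
    have e3 : (p - q) ^ 2 = θ * (1 - lam * θ) + lam * θ * (1 - θ) - 2 * (p * q) := by
      linear_combination hp2 + hq2
    exact auxXM1 hlam0 hθ0 hθlam hp0 hq0 e3
  have h1tl : 0 < 1 - θ - lam * θ := aux1TL hlam0 hθ0 hθlam
  have hkey : (1 - xm) * (1 - xp) = (1 - θ - lam * θ) ^ 2 := by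
    linear_combination (-1 : ℝ) * hsum + hprod
  have hxp1 : xp < 1 := by
    have hpos : 0 < (1 - xm) * (1 - xp) := by rw [hkey]; exact pow_pos h1tl 2
    by_contra h
    push_neg at h
    have h2 : (1 - xm) * (1 - xp) ≤ 0 :=
      mul_nonpos_of_nonneg_of_nonpos (by linarith) (by linarith)
    linarith
  have hxpw : xp < w := by linarith
  -- sqrt evaluations
  have hsprod : Real.sqrt (xm * xp) = θ * (1 - lam) := by
    rw [hprod]; exact Real.sqrt_sq (mul_nonneg hθ0.le (by linarith))
  have hs1 : Real.sqrt ((1 - xm) * (1 - xp)) = 1 - θ - lam * θ := by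
    rw [hkey]; exact Real.sqrt_sq h1tl.le
  obtain ⟨S, hSdef⟩ : ∃ x : ℝ, Real.sqrt ((w - xm) * (w - xp)) = x := ⟨_, rfl⟩
  -- the three basic integrals
  have hI0 : (∫ x in xm..xp, Real.sqrt ((x - xm) * (xp - x)) / (0 - x))
      = Real.pi * ((0 - (xm + xp) / 2) + (θ * (1 - lam))) := by
    rw [Ilt hxm0 hxmlt, show (0 - xm) * (0 - xp) = xm * xp by ring, hsprod]
  have hI1 : (∫ x in xm..xp, Real.sqrt ((x - xm) * (xp - x)) / (1 - x))
      = Real.pi * ((1 - (xm + xp) / 2) - (1 - θ - lam * θ)) := by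
    rw [Igt hxmlt hxp1, hs1]
  have hIw : (∫ x in xm..xp, Real.sqrt ((x - xm) * (xp - x)) / (w - x))
      = Real.pi * ((w - (xm + xp) / 2) - S) := by
    rw [Igt hxmlt hxpw, hSdef]
  -- pointwise decomposition
  have heqfun : Set.EqOn (fun x => g x / (w - x))
      (fun x => (-(1 / (2 * Real.pi * lam * θ)) * (1 / w))
            * (Real.sqrt ((x - xm) * (xp - x)) / (0 - x))
          + ((1 / (2 * Real.pi * lam * θ)) * (1 / (w - 1)))
            * (Real.sqrt ((x - xm) * (xp - x)) / (1 - x))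
          + (-(1 / (2 * Real.pi * lam * θ)) * (1 / (w * (w - 1))))
            * (Real.sqrt ((x - xm) * (xp - x)) / (w - x)))
      (Set.uIcc xm xp) := by
    intro x hx
    rw [Set.uIcc_of_le hxmlt.le] at hx
    have hx0 : 0 < x := lt_of_lt_of_le hxm0 hx.1
    have hx1 : x < 1 := lt_of_le_of_lt hx.2 hxp1
    have hxw : x < w := by linarith
    have hw0 : (0:ℝ) < w := by linarith
    simp only [hg x]
    have h1x : (1:ℝ) - x ≠ 0 := sub_ne_zero.2 hx1.ne'
    have hwx : w - x ≠ 0 := sub_ne_zero.2 hxw.ne'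
    have hw1 : w - 1 ≠ 0 := sub_ne_zero.2 hw.ne'
    field_simp [hx0.ne', hπ.ne', hlam0.ne', hθ0.ne', hw0.ne']
    ring
  rw [intervalIntegral.integral_congr heqfun]
  -- integrability
  have hint : ∀ c : ℝ, (∀ x ∈ Set.uIcc xm xp, c - x ≠ 0) →
      IntervalIntegrable (fun x => Real.sqrt ((x - xm) * (xp - x)) / (c - x))
        MeasureTheory.volume xm xp := by
    intro c hc
    exact (ContinuousOn.div (by fun_prop) (by fun_prop) hc).intervalIntegrable
  have hne0 : ∀ x ∈ Set.uIcc xm xp, (0:ℝ) - x ≠ 0 := by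
    intro x hx
    rw [Set.uIcc_of_le hxmlt.le] at hx
    have h0 : 0 < x := lt_of_lt_of_le hxm0 hx.1
    intro h
    rw [sub_eq_zero] at h
    exact h0.ne' h.symm
  have hne1 : ∀ x ∈ Set.uIcc xm xp, (1:ℝ) - x ≠ 0 := by
    intro x hx
    rw [Set.uIcc_of_le hxmlt.le] at hx
    have h0 : x < 1 := lt_of_le_of_lt hx.2 hxp1
    exact sub_ne_zero.2 h0.ne'
  have hnew : ∀ x ∈ Set.uIcc xm xp, w - x ≠ 0 := by
    intro x hx
    rw [Set.uIcc_of_le hxmlt.le] at hx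
    have h0 : x < w := lt_of_le_of_lt hx.2 hxpw
    exact sub_ne_zero.2 h0.ne'
  rw [intervalIntegral.integral_add
      (((hint 0 hne0).const_mul _).add ((hint 1 hne1).const_mul _))
      ((hint w hnew).const_mul _),
    intervalIntegral.integral_add ((hint 0 hne0).const_mul _) ((hint 1 hne1).const_mul _),
    intervalIntegral.integral_const_mul, intervalIntegral.integral_const_mul,
    intervalIntegral.integral_const_mul, hI0, hI1, hIw]
  -- RHS sqrt
  have hrpos : 0 < r := by rw [hr]; positivity
  have hABC : A * w ^ 2 - B * w + C = r ^ 2 * ((w - xm) * (w - xp)) := by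
    have h1 : (w - xm) * (w - xp)
        = w ^ 2 - (2 * θ + 2 * lam * θ - 4 * lam * θ ^ 2) * w + (θ * (1 - lam)) ^ 2 := by
      linear_combination (-w) * hsum + hprod
    rw [h1, hA, hB, hC, hr]
    field_simp
    ring
  have hS : Real.sqrt (A * w ^ 2 - B * w + C) = r * S := by
    rw [hABC, Real.sqrt_mul (sq_nonneg r), Real.sqrt_sq hrpos.le, hSdef]
  rw [hS, hr, hsum]
  have hw0 : (0:ℝ) < w := by linarith
  have hw1 : w - 1 ≠ 0 := sub_ne_zero.2 hw.ne'
  field_simp [hπ.ne', hlam0.ne', hθ0.ne', hw0.ne', hw1]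
  ring
end

section
/- Let λ ∈ (0,1), θ ∈ (0,1) with θ(λ+1) < 1, set x_± = (√(θ(1-λθ)) ± √(λθ(1-θ)))² and g(x) = √((x - x_-)(x_+ - x))/(2πλθ·x(1-x)). Then ∫_{x_-}^{x_+} log(1-x)·g(x) dx = [(1-θ)log(1-θ) + (1-λθ)log(1-λθ) - (1-θ(λ+1))log(1-θ(λ+1))]/(λθ). -/
set_option maxHeartbeats 1000000

open MeasureTheory intervalIntegral Metric Set

lemma my_cauchy_master (f : ℂ → ℂ)
    (hf : ∀ z : ℂ, z ∈ closedBall (0:ℂ) 1 → DifferentiableAt ℂ f z)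
    (u v : ℝ) (huv : |v| < u) :
    ∫ t in (0:ℝ)..(2*Real.pi),
        f (circleMap 0 1 t) / ((u^2 + v^2 - 2*u*v*Real.cos t : ℝ) : ℂ)
      = 2*Real.pi * f ((v:ℂ)/(u:ℂ)) / ((u:ℂ)^2 - (v:ℂ)^2) := by
  have hu : 0 < u := (abs_nonneg v).trans_lt huv
  have hu0 : (u:ℂ) ≠ 0 := by exact_mod_cast hu.ne'
  have huv2 : v^2 < u^2 := by nlinarith [abs_nonneg v, sq_abs v]
  have hn5 : ((u:ℂ)^2 - (v:ℂ)^2) ≠ 0 := by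
    intro h
    have : ((u^2 - v^2 : ℝ) : ℂ) = 0 := by push_cast; linear_combination h
    have := Complex.ofReal_eq_zero.mp this
    nlinarith
  -- membership of circle points in closed ball
  have hmem : ∀ t : ℝ, circleMap 0 1 t ∈ closedBall (0:ℂ) 1 := by
    intro t
    simp [norm_circleMap_zero, mem_closedBall, Complex.dist_eq]
  -- continuity of f on circle
  have hfc : Continuous fun t : ℝ => f (circleMap 0 1 t) := by
    refine continuous_iff_continuousAt.2 fun t => ?_
    exact ((hf _ (hmem t)).continuousAt).comp (continuous_circleMap 0 1).continuousAt
  have hW : (v:ℂ)/(u:ℂ) ∈ ball (0:ℂ) 1 := by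
    simp only [mem_ball, Complex.dist_eq, sub_zero, norm_div, Complex.norm_real, Real.norm_eq_abs]
    rw [abs_of_pos hu, div_lt_one hu]
    exact huv
  -- nonvanishing of u - v*z on closed ball
  have hnz : ∀ z : ℂ, z ∈ closedBall (0:ℂ) 1 → (u:ℂ) - v*z ≠ 0 := by
    intro z hz h
    have habs : ‖z‖ ≤ 1 := by
      simpa [mem_closedBall, Complex.dist_eq] using hz
    have : (u:ℂ) = v*z := by linear_combination h
    have h2 : ‖(u:ℂ)‖ = |v| * ‖z‖ := by
      rw [this]; simp [map_mul]
    rw [Complex.norm_real, Real.norm_eq_abs, abs_of_pos hu] at h2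
    nlinarith [norm_nonneg z, abs_nonneg v, mul_le_of_le_one_right (abs_nonneg v) habs]
  -- Cauchy integral formula
  have hdiff : DiffContOnCl ℂ f (ball (0:ℂ) 1) := by
    apply DifferentiableOn.diffContOnCl
    rw [closure_ball (0:ℂ) one_ne_zero]
    exact fun z hz => (hf z hz).differentiableWithinAt
  have h1 := hdiff.circleIntegral_sub_inv_smul hW
  -- Cauchy-Goursat
  have h2 : (∮ z in C(0, 1), ((u:ℂ) - v*z)⁻¹ • f z) = 0 := by
    apply Complex.circleIntegral_eq_zero_of_differentiable_on_off_countable zero_le_one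
      countable_empty
    · apply ContinuousOn.fun_smul
      · exact (ContinuousOn.inv₀ (by fun_prop) (fun z hz => hnz z hz))
      · exact fun z hz => ((hf z hz).continuousAt).continuousWithinAt
    · intro z hz
      refine DifferentiableAt.fun_smul (DifferentiableAt.fun_inv (by fun_prop) (hnz z (ball_subset_closedBall hz.1))) ?_
      exact hf z (ball_subset_closedBall hz.1)
  -- unfold circle integrals
  simp only [circleIntegral, deriv_circleMap, smul_eq_mul] at h1 h2
  -- positivity of the denominator
  have hQ : ∀ t : ℝ, 0 < u^2 + v^2 - 2*u*v*Real.cos t := by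
    intro t
    have hc1 : v * Real.cos t ≤ |v| := by
      calc v * Real.cos t ≤ |v * Real.cos t| := le_abs_self _
        _ = |v| * |Real.cos t| := abs_mul _ _
        _ ≤ |v| * 1 := by gcongr; exact Real.abs_cos_le_one t
        _ = |v| := mul_one _
    have hpos : 0 < u - v * Real.cos t := by linarith
    nlinarith [Real.sin_sq_add_cos_sq t, sq_nonneg (v * Real.sin t), mul_pos hpos hpos]
  have hwne : ∀ t : ℝ, circleMap 0 1 t - (v:ℂ)/(u:ℂ) ≠ 0 := by
    intro t h
    rw [sub_eq_zero] at h
    have h2 : ‖circleMap 0 1 t‖ = ‖(v:ℂ)/(u:ℂ)‖ := by rw [h]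
    rw [norm_circleMap_zero] at h2
    simp only [norm_div, Complex.norm_real, Real.norm_eq_abs] at h2
    rw [abs_of_pos hu] at h2
    have : |v| / u < 1 := (div_lt_one hu).2 huv
    rw [← h2] at this
    norm_num at this
  -- key pointwise identity
  have key : ∀ t : ℝ, f (circleMap 0 1 t) / ((u^2+v^2-2*u*v*Real.cos t : ℝ):ℂ)
      = ((u:ℂ)^2 - (v:ℂ)^2)⁻¹ * Complex.I⁻¹ *
        ((v:ℂ) * (circleMap 0 1 t * Complex.I *
            (((u:ℂ) - (v:ℂ) * circleMap 0 1 t)⁻¹ * f (circleMap 0 1 t)))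
          + circleMap 0 1 t * Complex.I *
            ((circleMap 0 1 t - (v:ℂ)/(u:ℂ))⁻¹ * f (circleMap 0 1 t))) := by
    intro t
    set z := circleMap 0 1 t with hzdef
    have hz0 : z ≠ 0 := by
      intro h
      have h3 := norm_circleMap_zero 1 t
      rw [← hzdef, h] at h3
      simp at h3
    have hcs : ((Real.sin t : ℝ):ℂ)^2 + ((Real.cos t : ℝ):ℂ)^2 = 1 := by
      exact_mod_cast Real.sin_sq_add_cos_sq t
    have hz2 : z^2 + 1 = 2 * z * ((Real.cos t : ℝ) : ℂ) := by
      rw [hzdef, show circleMap 0 1 t = Complex.exp ((t:ℂ) * Complex.I) by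
        simp [circleMap], Complex.exp_mul_I, ← Complex.ofReal_cos, ← Complex.ofReal_sin]
      linear_combination ((Real.sin t : ℝ):ℂ)^2 * Complex.I_sq - hcs
    have hQt : ((u^2+v^2-2*u*v*Real.cos t : ℝ):ℂ) ≠ 0 := by
      exact_mod_cast Complex.ofReal_ne_zero.2 (hQ t).ne'
    have hn2 : (u:ℂ) - (v:ℂ)*z ≠ 0 := hnz z (hmem t)
    have hprod : ((u:ℂ) - (v:ℂ)*z) * ((u:ℂ)*z - (v:ℂ))
        = z * ((u^2+v^2-2*u*v*Real.cos t : ℝ):ℂ) := by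
      have hz2' := hz2
      rw [Complex.ofReal_cos] at hz2'
      push_cast
      linear_combination (-(u:ℂ)*(v:ℂ)) * hz2'
    have hn4 : (u:ℂ)*z - (v:ℂ) ≠ 0 := by
      intro h
      rw [h, mul_zero] at hprod
      exact (mul_ne_zero hz0 hQt) hprod.symm
    have hn3 : z - (v:ℂ)/(u:ℂ) ≠ 0 := hwne t
    have e3 : ((u:ℂ)*z - (v:ℂ)) = (u:ℂ) * (z - (v:ℂ)/(u:ℂ)) := by field_simp
    rw [div_eq_mul_inv, show ((u^2+v^2-2*u*v*Real.cos t : ℝ):ℂ)⁻¹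
        = z * (((u:ℂ) - (v:ℂ)*z)⁻¹ * ((u:ℂ)*z - (v:ℂ))⁻¹) from by
      rw [← mul_inv, hprod, mul_inv, ← mul_assoc, mul_inv_cancel₀ hz0, one_mul]]
    have e4 : (z - (v:ℂ)/(u:ℂ))⁻¹ = (u:ℂ) * ((u:ℂ)*z - (v:ℂ))⁻¹ := by
      rw [e3, mul_inv, ← mul_assoc, mul_inv_cancel₀ hu0, one_mul]
    rw [e4]
    have hI := Complex.I_ne_zero
    rw [show (v:ℂ) * (z*Complex.I*(((u:ℂ) - (v:ℂ)*z)⁻¹ * f z))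
          + z*Complex.I*((u:ℂ) * ((u:ℂ)*z - (v:ℂ))⁻¹ * f z)
        = Complex.I * ((((v:ℂ) * ((u:ℂ)-(v:ℂ)*z)⁻¹ + (u:ℂ) * ((u:ℂ)*z-(v:ℂ))⁻¹)) * (z * f z)) from by
      ring, mul_assoc, inv_mul_cancel_left₀ hI]
    have comb : (v:ℂ) * ((u:ℂ)-(v:ℂ)*z)⁻¹ + (u:ℂ) * ((u:ℂ)*z-(v:ℂ))⁻¹
        = ((u:ℂ)^2-(v:ℂ)^2) * ((((u:ℂ)-(v:ℂ)*z))⁻¹ * (((u:ℂ)*z-(v:ℂ)))⁻¹) := by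
      field_simp
      ring
    rw [comb, mul_assoc ((u:ℂ)^2-(v:ℂ)^2), inv_mul_cancel_left₀ hn5]
    ring
  rw [intervalIntegral.integral_congr (fun t _ => key t)]
  have hcA : Continuous fun t : ℝ => circleMap 0 1 t * Complex.I *
      (((u:ℂ) - (v:ℂ) * circleMap 0 1 t)⁻¹ * f (circleMap 0 1 t)) := by
    apply Continuous.mul (by fun_prop)
    apply Continuous.mul _ hfc
    exact Continuous.inv₀ (by fun_prop) (fun t => hnz _ (hmem t))
  have hcB : Continuous fun t : ℝ => circleMap 0 1 t * Complex.I *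
      ((circleMap 0 1 t - (v:ℂ)/(u:ℂ))⁻¹ * f (circleMap 0 1 t)) := by
    apply Continuous.mul (by fun_prop)
    apply Continuous.mul _ hfc
    exact Continuous.inv₀ (by fun_prop) hwne
  rw [intervalIntegral.integral_const_mul, intervalIntegral.integral_add
    ((continuous_const.fun_mul hcA).intervalIntegrable _ _) (hcB.intervalIntegrable _ _),
    intervalIntegral.integral_const_mul, h2, h1, mul_zero, zero_add]
  have hI := Complex.I_ne_zero
  rw [show 2 * (Real.pi:ℂ) * Complex.I * f ((v:ℂ)/(u:ℂ))
      = Complex.I * (2 * (Real.pi:ℂ) * f ((v:ℂ)/(u:ℂ))) from by ring,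
    mul_assoc, inv_mul_cancel_left₀ hI, div_eq_mul_inv]
  ring


lemma my_real_master (p q u v : ℝ) (hq : 0 < q) (hpq : q < p) (huv : |v| < u) :
    ∫ t in (0:ℝ)..(2*Real.pi),
        Real.log (p^2+q^2+2*p*q*Real.cos t) / (u^2+v^2-2*u*v*Real.cos t)
      = 4*Real.pi * Real.log (p + q*(v/u)) / (u^2-v^2) := by
  have hu : 0 < u := (abs_nonneg v).trans_lt huv
  have hp : 0 < p := hq.trans hpq
  set F : ℂ → ℂ := fun z => Complex.log ((p:ℂ) + q*z) with hFdef
  have hre : ∀ z : ℂ, z ∈ closedBall (0:ℂ) 1 → 0 < ((p:ℂ) + q*z).re := by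
    intro z hz
    have h1 : |z.re| ≤ 1 := by
      have := Complex.abs_re_le_norm z
      have h2 : ‖z‖ ≤ 1 := by simpa [mem_closedBall, Complex.dist_eq] using hz
      linarith
    have : ((p:ℂ) + q*z).re = p + q * z.re := by
      simp [Complex.add_re, Complex.mul_re]
    rw [this]
    have := abs_le.1 h1
    nlinarith
  have hF : ∀ z : ℂ, z ∈ closedBall (0:ℂ) 1 → DifferentiableAt ℂ F z := by
    intro z hz
    have h := DifferentiableAt.comp z
      (Complex.differentiableAt_log (Complex.mem_slitPlane_iff.2 (Or.inl (hre z hz))))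
      (by fun_prop : DifferentiableAt ℂ (fun z : ℂ => (p:ℂ) + q*z) z)
    exact h
  have hmain := my_cauchy_master F hF u v huv
  have hQ : ∀ t : ℝ, 0 < u^2 + v^2 - 2*u*v*Real.cos t := by
    intro t
    have hc1 : v * Real.cos t ≤ |v| := by
      calc v * Real.cos t ≤ |v * Real.cos t| := le_abs_self _
        _ = |v| * |Real.cos t| := abs_mul _ _
        _ ≤ |v| * 1 := by gcongr; exact Real.abs_cos_le_one t
        _ = |v| := mul_one _
    have hpos : 0 < u - v * Real.cos t := by linarith
    nlinarith [Real.sin_sq_add_cos_sq t, sq_nonneg (v * Real.sin t), mul_pos hpos hpos]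
  have hP : ∀ t : ℝ, 0 < p^2+q^2+2*p*q*Real.cos t := by
    intro t
    nlinarith [Real.neg_one_le_cos t, mul_pos hp hq, sq_nonneg (p - q)]
  have habs : ∀ t : ℝ, ‖(p:ℂ) + q * circleMap 0 1 t‖^2
      = p^2+q^2+2*p*q*Real.cos t := by
    intro t
    rw [show circleMap 0 1 t = Complex.exp ((t:ℂ)*Complex.I) by simp [circleMap],
      Complex.exp_mul_I, ← Complex.ofReal_cos, ← Complex.ofReal_sin, Complex.sq_norm,
      Complex.normSq_apply]
    simp only [Complex.add_re, Complex.add_im, Complex.mul_re, Complex.mul_im,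
      Complex.ofReal_re, Complex.ofReal_im, Complex.I_re, Complex.I_im]
    ring_nf
    nlinarith [Real.sin_sq_add_cos_sq t]
  have hlog : ∀ t : ℝ, Real.log (p^2+q^2+2*p*q*Real.cos t)
      = 2 * (F (circleMap 0 1 t)).re := by
    intro t
    rw [← habs t, Real.log_pow, Complex.log_re]
    norm_num
  have hdiv : ∀ (w : ℂ) (a : ℝ), (w / (a:ℂ)).re = w.re / a := by
    intro w a
    rw [div_eq_mul_inv, ← Complex.ofReal_inv, Complex.mul_re, Complex.ofReal_re,
      Complex.ofReal_im, mul_zero, sub_zero, div_eq_mul_inv]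
  have hFc : Continuous fun t : ℝ => F (circleMap 0 1 t) := by
    refine continuous_iff_continuousAt.2 fun t => ?_
    have hmem : circleMap 0 1 t ∈ closedBall (0:ℂ) 1 := by
      simp [norm_circleMap_zero, mem_closedBall, Complex.dist_eq]
    exact ((hF _ hmem).continuousAt).comp (continuous_circleMap 0 1).continuousAt
  have hGc : Continuous fun t : ℝ => F (circleMap 0 1 t) / ((u^2+v^2-2*u*v*Real.cos t : ℝ):ℂ) := by
    apply hFc.div (by fun_prop)
    intro t
    exact_mod_cast Complex.ofReal_ne_zero.2 (hQ t).ne'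
  have hswap : (∫ t in (0:ℝ)..(2*Real.pi),
        (F (circleMap 0 1 t) / ((u^2+v^2-2*u*v*Real.cos t : ℝ):ℂ)).re)
      = (∫ t in (0:ℝ)..(2*Real.pi),
        F (circleMap 0 1 t) / ((u^2+v^2-2*u*v*Real.cos t : ℝ):ℂ)).re := by
    have := Complex.reCLM.intervalIntegral_comp_comm
      (hGc.intervalIntegrable 0 (2*Real.pi)) (μ := volume)
    simpa using this
  have hx : 0 < p + q*(v/u) := by
    have h1 : |q*(v/u)| < q := by
      rw [abs_mul, abs_div, abs_of_pos hq, abs_of_pos hu]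
      calc q * (|v|/u) < q * 1 := by
            apply mul_lt_mul_of_pos_left _ hq
            rw [div_lt_one hu]; exact huv
        _ = q := mul_one q
    have := abs_le.1 h1.le
    nlinarith
  calc ∫ t in (0:ℝ)..(2*Real.pi),
        Real.log (p^2+q^2+2*p*q*Real.cos t) / (u^2+v^2-2*u*v*Real.cos t)
      = ∫ t in (0:ℝ)..(2*Real.pi),
          2 * (F (circleMap 0 1 t) / ((u^2+v^2-2*u*v*Real.cos t : ℝ):ℂ)).re := by
        apply intervalIntegral.integral_congr
        intro t _
        simp only [hlog, hdiv]
        ring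
    _ = 2 * (∫ t in (0:ℝ)..(2*Real.pi),
          F (circleMap 0 1 t) / ((u^2+v^2-2*u*v*Real.cos t : ℝ):ℂ)).re := by
        rw [intervalIntegral.integral_const_mul, hswap]
    _ = 2 * (2*Real.pi * F ((v:ℂ)/(u:ℂ)) / ((u:ℂ)^2 - (v:ℂ)^2)).re := by rw [hmain]
    _ = 4*Real.pi * Real.log (p + q*(v/u)) / (u^2-v^2) := by
        have h1 : F ((v:ℂ)/(u:ℂ)) = ((Real.log (p + q*(v/u)) : ℝ) : ℂ) := by
          rw [hFdef]
          simp only []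
          rw [Complex.ofReal_log hx.le]
          push_cast
          ring_nf
        rw [h1, show ((u:ℂ)^2 - (v:ℂ)^2) = ((u^2-v^2 : ℝ):ℂ) by push_cast; ring,
          show (2*Real.pi : ℂ) * ((Real.log (p + q*(v/u)) : ℝ):ℂ) / ((u^2-v^2 : ℝ):ℂ)
            = (((2*Real.pi * Real.log (p + q*(v/u)) / (u^2-v^2)) : ℝ) : ℂ) by push_cast; ring]
        rw [Complex.ofReal_re]
        ring


lemma my_sq_inj {a b : ℝ} (ha : 0 ≤ a) (hb : 0 ≤ b) (h : a^2 = b^2) : a = b := by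
  have h2 : |a| = |b| := by
    rw [← Real.sqrt_sq_eq_abs, ← Real.sqrt_sq_eq_abs, h]
  rwa [abs_of_nonneg ha, abs_of_nonneg hb] at h2

lemma my_half (G : ℝ → ℝ) (hc : Continuous G) (hsym : ∀ t, G (2*Real.pi - t) = G t) :
    (∫ t in (0:ℝ)..(2*Real.pi), G t) = 2 * ∫ t in (0:ℝ)..Real.pi, G t := by
  have h1 : (∫ t in (0:ℝ)..Real.pi, G (2*Real.pi - t)) = ∫ t in Real.pi..(2*Real.pi), G t := by
    have h := intervalIntegral.integral_comp_sub_left (a := (0:ℝ)) (b := Real.pi) G (2*Real.pi)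
    rw [show 2*Real.pi - Real.pi = Real.pi by ring, show 2*Real.pi - 0 = 2*Real.pi by ring] at h
    exact h
  have h2 : (∫ t in (0:ℝ)..Real.pi, G (2*Real.pi - t)) = ∫ t in (0:ℝ)..Real.pi, G t := by
    simp only [hsym]
  rw [← intervalIntegral.integral_add_adjacent_intervals
    (hc.intervalIntegrable 0 Real.pi) (hc.intervalIntegrable Real.pi (2*Real.pi)), ← h1, h2]
  ring

/-- For `λ ∈ (0,1)`, `θ ∈ (0,1)` with `θ(λ+1) < 1`, the density
`g(x) = √((x-x_-)(x_+-x))/(2πλθ·x(1-x))` of the stationary free Jacobi law satisfies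
`∫_{x_-}^{x_+} log(1-x)·g(x) dx
  = [(1-θ)log(1-θ) + (1-λθ)log(1-λθ) - (1-θ(λ+1))log(1-θ(λ+1))]/(λθ)`. -/
theorem stmt_8 (lam θ : ℝ) (hlam0 : 0 < lam) (hlam1 : lam < 1)
    (hθ0 : 0 < θ) (hθ1 : θ < 1) (hθlam : θ * (lam + 1) < 1)
    (xp xm : ℝ) (g : ℝ → ℝ)
    (hxp : xp = (Real.sqrt (θ * (1 - lam * θ)) + Real.sqrt (lam * θ * (1 - θ))) ^ 2)
    (hxm : xm = (Real.sqrt (θ * (1 - lam * θ)) - Real.sqrt (lam * θ * (1 - θ))) ^ 2)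
    (hg : ∀ x : ℝ, g x =
      Real.sqrt ((x - xm) * (xp - x)) / (2 * Real.pi * lam * θ * x * (1 - x))) :
    (∫ x in xm..xp, Real.log (1 - x) * g x) =
      ((1 - θ) * Real.log (1 - θ) + (1 - lam * θ) * Real.log (1 - lam * θ) -
        (1 - θ * (lam + 1)) * Real.log (1 - θ * (lam + 1))) / (lam * θ) := by
  have hπ := Real.pi_pos
  have hlt1 : lam * θ < 1 := by nlinarith
  have h1mθ : 0 < 1 - θ := by linarith
  have h1mlt : 0 < 1 - lam*θ := by linarith
  have h1mtl : 0 < 1 - θ*(lam+1) := by linarith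
  obtain ⟨r, hrdef⟩ : ∃ x, x = Real.sqrt (θ * (1 - lam * θ)) := ⟨_, rfl⟩
  obtain ⟨s, hsdef⟩ : ∃ x, x = Real.sqrt (lam * θ * (1 - θ)) := ⟨_, rfl⟩
  obtain ⟨p, hpdef⟩ : ∃ x, x = Real.sqrt ((1-θ) * (1 - lam*θ)) := ⟨_, rfl⟩
  obtain ⟨q, hqdef⟩ : ∃ x, x = Real.sqrt lam * θ := ⟨_, rfl⟩
  rw [← hrdef, ← hsdef] at hxp hxm
  have hr2 : r^2 = θ * (1 - lam*θ) := by rw [hrdef]; exact Real.sq_sqrt (by positivity)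
  have hs2 : s^2 = lam * θ * (1 - θ) := by rw [hsdef]; exact Real.sq_sqrt (by positivity)
  have hp2 : p^2 = (1-θ) * (1 - lam*θ) := by rw [hpdef]; exact Real.sq_sqrt (by positivity)
  have hq2 : q^2 = lam * θ^2 := by rw [hqdef, mul_pow, Real.sq_sqrt hlam0.le]
  have hr_pos : 0 < r := by rw [hrdef]; exact Real.sqrt_pos.2 (by positivity)
  have hs_pos : 0 < s := by rw [hsdef]; exact Real.sqrt_pos.2 (by positivity)
  have hp_pos : 0 < p := by rw [hpdef]; exact Real.sqrt_pos.2 (by positivity)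
  have hq_pos : 0 < q := by
    rw [hqdef]; exact mul_pos (Real.sqrt_pos.2 hlam0) hθ0
  have hrspq : r * s = p * q := by
    apply my_sq_inj (by positivity) (by positivity)
    rw [mul_pow, mul_pow, hr2, hs2, hp2, hq2]; ring
  have halpha : r^2 + s^2 + p^2 + q^2 = 1 := by
    rw [hr2, hs2, hp2, hq2]; ring
  have hq_lt_p : q < p := by
    have h : q^2 < p^2 := by rw [hp2, hq2]; nlinarith
    exact lt_of_pow_lt_pow_left₀ 2 hp_pos.le h
  have hs_lt_r : s < r := by
    have h : s^2 < r^2 := by rw [hr2, hs2]; nlinarith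
    exact lt_of_pow_lt_pow_left₀ 2 hr_pos.le h
  have hxm_pos : 0 < xm := by rw [hxm]; exact pow_pos (by linarith) 2
  have h1mxm : 1 - xm = (p+q)^2 := by rw [hxm]; linear_combination -halpha + 2*hrspq
  have h1mxp : 1 - xp = (p-q)^2 := by rw [hxp]; linear_combination -halpha - 2*hrspq
  have hxp_lt_1 : xp < 1 := by nlinarith [h1mxp, pow_pos (show (0:ℝ) < p - q by linarith) 2]
  have hxm_lt_xp : xm < xp := by
    rw [hxm, hxp]; nlinarith [mul_pos hr_pos hs_pos]
  -- the substitution map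
  obtain ⟨φ, hφdef⟩ : ∃ f : ℝ → ℝ, f = fun t => r^2 + s^2 - 2*r*s*Real.cos t := ⟨_, rfl⟩
  have hφ0 : φ 0 = xm := by simp only [hφdef]; rw [hxm]; simp [Real.cos_zero]; ring
  have hφπ : φ Real.pi = xp := by simp only [hφdef]; rw [hxp]; simp [Real.cos_pi]; ring
  have hQpos : ∀ t : ℝ, 0 < φ t := by
    intro t
    simp only [hφdef]
    have h1 : 0 < (r - s)^2 := pow_pos (by linarith) 2
    have h2 : 2*r*s*Real.cos t ≤ 2*r*s*1 :=
      mul_le_mul_of_nonneg_left (Real.cos_le_one t) (by positivity)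
    have h3 : (r-s)^2 = r^2+s^2-2*r*s := by ring
    linarith
  have h1x : ∀ t : ℝ, 1 - φ t = p^2 + q^2 + 2*p*q*Real.cos t := by
    intro t
    simp only [hφdef]
    linear_combination -halpha + (2*Real.cos t) * hrspq
  have hPpos : ∀ t : ℝ, 0 < p^2 + q^2 + 2*p*q*Real.cos t := by
    intro t
    have h1 : 0 < (p - q)^2 := pow_pos (by linarith) 2
    have h2 : 2*p*q*(-1) ≤ 2*p*q*Real.cos t :=
      mul_le_mul_of_nonneg_left (Real.neg_one_le_cos t) (by positivity)
    have h3 : (p-q)^2 = p^2+q^2-2*p*q := by ring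
    linarith
  have himg : φ '' (uIcc (0:ℝ) Real.pi) ⊆ Icc xm xp := by
    rintro x ⟨t, _, rfl⟩
    constructor
    · simp only [hφdef]; rw [hxm]
      have h2 : 2*r*s*Real.cos t ≤ 2*r*s*1 :=
        mul_le_mul_of_nonneg_left (Real.cos_le_one t) (by positivity)
      nlinarith
    · simp only [hφdef]; rw [hxp]
      have h2 : 2*r*s*(-1) ≤ 2*r*s*Real.cos t :=
        mul_le_mul_of_nonneg_left (Real.neg_one_le_cos t) (by positivity)
      nlinarith
  -- continuity of the integrand on [xm, xp]
  have hgfun : g = fun x => Real.sqrt ((x - xm) * (xp - x)) / (2 * Real.pi * lam * θ * x * (1 - x)) :=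
    funext hg
  have hcont : ContinuousOn (fun x => Real.log (1 - x) * g x) (Icc xm xp) := by
    apply ContinuousOn.mul
    · apply ContinuousOn.log (by fun_prop)
      intro x hx
      have := hx.2
      have h2 : x < 1 := lt_of_le_of_lt this hxp_lt_1
      linarith
    · rw [hgfun]
      apply ContinuousOn.div (by fun_prop) (by fun_prop)
      intro x hx
      have h1 : 0 < x := lt_of_lt_of_le hxm_pos hx.1
      have h2 : x < 1 := lt_of_le_of_lt hx.2 hxp_lt_1
      have h3 : 0 < 1 - x := by linarith
      have : 0 < 2 * Real.pi * lam * θ * x * (1 - x) :=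
        mul_pos (mul_pos (mul_pos (mul_pos (by linarith : (0:ℝ) < 2*Real.pi) hlam0) hθ0) h1) h3
      exact this.ne'
  -- derivative of φ
  have hderiv : ∀ t ∈ uIcc (0:ℝ) Real.pi, HasDerivAt φ (2*r*s*Real.sin t) t := by
    intro t _
    simp only [hφdef]
    have h1 : HasDerivAt (fun t : ℝ => r^2 + s^2 - 2*r*s*Real.cos t)
        (0 - 2*r*s*(-Real.sin t)) t := by
      exact (hasDerivAt_const t (r^2+s^2)).sub ((Real.hasDerivAt_cos t).const_mul (2*r*s))
    convert h1 using 1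
    ring
  have hsub := intervalIntegral.integral_comp_smul_deriv' hderiv (by fun_prop)
    (hcont.mono himg)
  rw [hφ0, hφπ] at hsub
  -- positivity facts restated without φ
  have hQe : ∀ t : ℝ, 0 < r^2+s^2-2*r*s*Real.cos t := by
    intro t; have := hQpos t; simpa [hφdef] using this
  have hPe : ∀ t : ℝ, 0 < p^2+q^2+2*p*q*Real.cos t := hPpos
  have hcos2π : ∀ t : ℝ, Real.cos (2*Real.pi - t) = Real.cos t := by
    intro t; rw [Real.cos_sub, Real.cos_two_pi, Real.sin_two_pi]; ring
  -- continuity of pieces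
  have hC1 : Continuous fun t : ℝ => Real.log (p^2+q^2+2*p*q*Real.cos t) :=
    Continuous.log (by fun_prop) (fun t => (hPe t).ne')
  have hC2 : Continuous fun t : ℝ =>
      Real.log (p^2+q^2+2*p*q*Real.cos t) / (r^2+s^2-2*r*s*Real.cos t) :=
    hC1.div (by fun_prop) (fun t => (hQe t).ne')
  have hC3 : Continuous fun t : ℝ =>
      Real.log (p^2+q^2+2*p*q*Real.cos t) / (p^2+q^2+2*p*q*Real.cos t) :=
    hC1.div (by fun_prop) (fun t => (hPe t).ne')
  -- pointwise congruence on [0, π]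
  have hEq : EqOn (fun t => (2*r*s*Real.sin t) • ((fun x => Real.log (1-x) * g x) ∘ φ) t)
      (fun t => (2*Real.pi*lam*θ)⁻¹ *
        (Real.log (p^2+q^2+2*p*q*Real.cos t)
          - xm*xp * (Real.log (p^2+q^2+2*p*q*Real.cos t) / (r^2+s^2-2*r*s*Real.cos t))
          - (1-xm)*(1-xp) * (Real.log (p^2+q^2+2*p*q*Real.cos t) / (p^2+q^2+2*p*q*Real.cos t))))
      (uIcc (0:ℝ) Real.pi) := by
    intro t ht
    rw [uIcc_of_le Real.pi_pos.le] at ht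
    have hsin : 0 ≤ Real.sin t := Real.sin_nonneg_of_nonneg_of_le_pi ht.1 ht.2
    simp only [Function.comp_apply, smul_eq_mul]
    rw [hg (φ t)]
    have hx := hQpos t
    have hPt := hPe t
    have h1 := h1x t
    have hS2 : (φ t - xm)*(xp - φ t) = (2*r*s*Real.sin t)^2 := by
      simp only [hφdef]; rw [hxm, hxp]
      linear_combination (-4*r^2*s^2) * Real.sin_sq_add_cos_sq t
    have hsqrt : Real.sqrt ((φ t - xm)*(xp - φ t)) = 2*r*s*Real.sin t := by
      rw [hS2]
      exact Real.sqrt_sq (mul_nonneg (mul_nonneg (mul_nonneg two_pos.le hr_pos.le) hs_pos.le) hsin)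
    rw [hsqrt]
    have hkey : (2*r*s*Real.sin t)^2
        = φ t * (1 - φ t) - xm*xp*(1-φ t) - (1-xm)*(1-xp)*(φ t) := by
      linear_combination -hS2
    -- rewrite the RHS denominators in terms of φ
    rw [show r^2+s^2-2*r*s*Real.cos t = φ t from by simp only [hφdef], ← h1]
    rw [show (2*r*s*Real.sin t) * (Real.log (1 - φ t) *
          ((2*r*s*Real.sin t) / (2 * Real.pi * lam * θ * φ t * (1 - φ t))))
        = (2*r*s*Real.sin t)^2 * Real.log (1 - φ t)
            / (2 * Real.pi * lam * θ * φ t * (1 - φ t)) from by ring, hkey]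
    have hd1 : φ t ≠ 0 := hx.ne'
    have hd2 : (1 : ℝ) - φ t ≠ 0 := by rw [h1]; exact hPt.ne'
    have hd3 : Real.pi ≠ 0 := hπ.ne'
    field_simp
  have hsplit : (∫ t in (0:ℝ)..Real.pi,
      (2*Real.pi*lam*θ)⁻¹ *
        (Real.log (p^2+q^2+2*p*q*Real.cos t)
          - xm*xp * (Real.log (p^2+q^2+2*p*q*Real.cos t) / (r^2+s^2-2*r*s*Real.cos t))
          - (1-xm)*(1-xp) * (Real.log (p^2+q^2+2*p*q*Real.cos t) / (p^2+q^2+2*p*q*Real.cos t))))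
      = (2*Real.pi*lam*θ)⁻¹ *
        ((∫ t in (0:ℝ)..Real.pi, Real.log (p^2+q^2+2*p*q*Real.cos t))
          - xm*xp * (∫ t in (0:ℝ)..Real.pi,
              Real.log (p^2+q^2+2*p*q*Real.cos t) / (r^2+s^2-2*r*s*Real.cos t))
          - (1-xm)*(1-xp) * (∫ t in (0:ℝ)..Real.pi,
              Real.log (p^2+q^2+2*p*q*Real.cos t) / (p^2+q^2+2*p*q*Real.cos t))) := by
    rw [intervalIntegral.integral_const_mul]
    congr 1
    rw [intervalIntegral.integral_sub
        ((hC1.fun_sub (continuous_const.fun_mul hC2)).intervalIntegrable _ _)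
        ((continuous_const.fun_mul hC3).intervalIntegrable _ _),
      intervalIntegral.integral_sub (hC1.intervalIntegrable _ _)
        ((continuous_const.fun_mul hC2).intervalIntegrable _ _),
      intervalIntegral.integral_const_mul, intervalIntegral.integral_const_mul]
  -- values of the three integrals
  have habs0 : |(0:ℝ)| < 1 := by norm_num
  have hV1 : (∫ t in (0:ℝ)..Real.pi, Real.log (p^2+q^2+2*p*q*Real.cos t))
      = 2*Real.pi*Real.log p := by
    have hm := my_real_master p q 1 0 hq_pos hq_lt_p habs0
    norm_num at hm
    have hh := my_half _ hC1 (fun t => by rw [hcos2π])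
    rw [hm] at hh
    linarith
  have hV2 : (∫ t in (0:ℝ)..Real.pi,
        Real.log (p^2+q^2+2*p*q*Real.cos t) / (r^2+s^2-2*r*s*Real.cos t))
      = 2*Real.pi * Real.log (p + q*(s/r)) / (r^2-s^2) := by
    have hm := my_real_master p q r s hq_pos hq_lt_p (by rwa [abs_of_pos hs_pos])
    have hh := my_half _ hC2 (fun t => by rw [hcos2π])
    rw [hm] at hh
    linear_combination -hh/2
  have hV3 : (∫ t in (0:ℝ)..Real.pi,
        Real.log (p^2+q^2+2*p*q*Real.cos t) / (p^2+q^2+2*p*q*Real.cos t))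
      = 2*Real.pi * Real.log (p + q*(-q/p)) / (p^2-q^2) := by
    have hm := my_real_master p q p (-q) hq_pos hq_lt_p
      (by rwa [abs_neg, abs_of_pos hq_pos])
    simp only [show ∀ t : ℝ, p^2+(-q)^2-2*p*(-q)*Real.cos t = p^2+q^2+2*p*q*Real.cos t
        from fun t => by ring,
      show p^2-(-q)^2 = p^2-q^2 from by ring] at hm
    have hh := my_half _ hC3 (fun t => by rw [hcos2π])
    rw [hm] at hh
    linear_combination -hh/2
  -- log identities
  have hLp : Real.log p = (Real.log (1-θ) + Real.log (1-lam*θ))/2 := by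
    rw [hpdef, Real.log_sqrt (by positivity), Real.log_mul h1mθ.ne' h1mlt.ne']
  have hW2 : Real.sqrt (θ*(1-θ))^2 = θ*(1-θ) := Real.sq_sqrt (by positivity)
  have hpr : p*r = (1-lam*θ) * Real.sqrt (θ*(1-θ)) := by
    apply my_sq_inj (mul_nonneg hp_pos.le hr_pos.le)
      (mul_nonneg h1mlt.le (Real.sqrt_nonneg _))
    rw [mul_pow, mul_pow, hp2, hr2, hW2]; ring
  have hqs : q*s = lam*θ * Real.sqrt (θ*(1-θ)) := by
    apply my_sq_inj (mul_nonneg hq_pos.le hs_pos.le)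
      (mul_nonneg (by positivity) (Real.sqrt_nonneg _))
    rw [mul_pow, mul_pow, hq2, hs2, hW2]; ring
  have hXval : p + q*(s/r) = Real.sqrt (θ*(1-θ)) / r := by
    rw [eq_div_iff hr_pos.ne', add_mul, mul_assoc, div_mul_cancel₀ _ hr_pos.ne']
    linear_combination hpr + hqs
  have hX2 : (p + q*(s/r))^2 = (1-θ)/(1-lam*θ) := by
    rw [hXval, div_pow, hW2, hr2, mul_div_mul_left _ _ hθ0.ne']
  have hXpos : 0 < p + q*(s/r) := by
    have h1 : 0 < q*(s/r) := mul_pos hq_pos (div_pos hs_pos hr_pos)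
    linarith
  have hL2 : Real.log (p + q*(s/r)) = (Real.log (1-θ) - Real.log (1-lam*θ))/2 := by
    have h1 : Real.log ((p + q*(s/r))^2) = 2 * Real.log (p + q*(s/r)) := by
      rw [Real.log_pow]; push_cast; ring
    rw [hX2, Real.log_div h1mθ.ne' h1mlt.ne'] at h1
    linarith
  have hYval : p + q*(-q/p) = (1-θ*(lam+1))/p := by
    field_simp
    linear_combination hp2 - hq2
  have hL3 : Real.log (p + q*(-q/p))
      = Real.log (1-θ*(lam+1)) - (Real.log (1-θ) + Real.log (1-lam*θ))/2 := by
    rw [hYval, Real.log_div h1mtl.ne' hp_pos.ne', hLp]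
  have hK1 : xm*xp = (r^2-s^2)^2 := by rw [hxm, hxp]; ring
  have hK2 : (1-xm)*(1-xp) = (p^2-q^2)^2 := by rw [h1mxm, h1mxp]; ring
  have hr2s2 : r^2-s^2 = θ*(1-lam) := by linear_combination hr2 - hs2
  have hp2q2 : p^2-q^2 = 1-θ*(lam+1) := by linear_combination hp2 - hq2
  calc (∫ x in xm..xp, Real.log (1 - x) * g x)
      = ∫ t in (0:ℝ)..Real.pi, (2*r*s*Real.sin t) • ((fun x => Real.log (1-x) * g x) ∘ φ) t :=
        hsub.symm
    _ = ∫ t in (0:ℝ)..Real.pi, (2*Real.pi*lam*θ)⁻¹ *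
          (Real.log (p^2+q^2+2*p*q*Real.cos t)
            - xm*xp * (Real.log (p^2+q^2+2*p*q*Real.cos t) / (r^2+s^2-2*r*s*Real.cos t))
            - (1-xm)*(1-xp) * (Real.log (p^2+q^2+2*p*q*Real.cos t) / (p^2+q^2+2*p*q*Real.cos t))) :=
        intervalIntegral.integral_congr hEq
    _ = (2*Real.pi*lam*θ)⁻¹ *
          (2*Real.pi*Real.log p
            - xm*xp * (2*Real.pi * Real.log (p + q*(s/r)) / (r^2-s^2))
            - (1-xm)*(1-xp) * (2*Real.pi * Real.log (p + q*(-q/p)) / (p^2-q^2))) := by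
        rw [hsplit, hV1, hV2, hV3]
    _ = ((1 - θ) * Real.log (1 - θ) + (1 - lam * θ) * Real.log (1 - lam * θ) -
          (1 - θ * (lam + 1)) * Real.log (1 - θ * (lam + 1))) / (lam * θ) := by
        rw [hK1, hK2, hLp, hL2, hL3, hr2s2, hp2q2]
        have hd1 : θ*(1-lam) ≠ 0 := (mul_pos hθ0 (by linarith)).ne'
        have hd2 : (1:ℝ)-θ*(lam+1) ≠ 0 := h1mtl.ne'
        field_simp
        ring
end

section
/- Let λ ∈ (0,1), θ ∈ (0,1) with θ(λ+1) < 1, and set r = 1/(λθ), A = r², B = 2(r + (r-2)/λ), C = (1 - 1/λ)². Then ∫_0^1 [(1 + 1/λ)z - r + √(Cz² - Bz + A)]/(z(1-z)) dz = -(2/(λθ))·[(1-θ)log(1-θ) + (1-λθ)log(1-λθ) - (1-θ(λ+1))log(1-θ(λ+1))]. In particular Cz² - Bz + A > 0 for all z ∈ [0,1] and the integrand extends continuously to [0,1]. -/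
open Real Set MeasureTheory intervalIntegral

set_option maxHeartbeats 2000000

/-- For `λ ∈ (0,1)`, `θ ∈ (0,1)` with `θ(λ+1) < 1`, with `r = 1/(λθ)`, `A = r²`,
`B = 2(r + (r-2)/λ)`, `C = (1-1/λ)²`, one has
`∫_0^1 [(1+1/λ)z - r + √(Cz² - Bz + A)]/(z(1-z)) dz
  = -(2/(λθ))·[(1-θ)log(1-θ) + (1-λθ)log(1-λθ) - (1-θ(λ+1))log(1-θ(λ+1))]`.
In particular `Cz² - Bz + A > 0` for all `z ∈ [0,1]` and the integrand extends
continuously to `[0,1]`. -/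
theorem stmt_10 (lam θ : ℝ) (hlam0 : 0 < lam) (hlam1 : lam < 1)
    (hθ0 : 0 < θ) (hθ1 : θ < 1) (hθlam : θ * (lam + 1) < 1)
    (r A B C : ℝ)
    (hr : r = 1 / (lam * θ)) (hA : A = r ^ 2)
    (hB : B = 2 * (r + (r - 2) / lam)) (hC : C = (1 - 1 / lam) ^ 2) :
    (∫ z in (0:ℝ)..1,
        ((1 + 1 / lam) * z - r + Real.sqrt (C * z ^ 2 - B * z + A)) / (z * (1 - z))) =
      -(2 / (lam * θ)) *
        ((1 - θ) * Real.log (1 - θ) + (1 - lam * θ) * Real.log (1 - lam * θ) -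
          (1 - θ * (lam + 1)) * Real.log (1 - θ * (lam + 1))) ∧
    (∀ z ∈ Set.Icc (0:ℝ) 1, C * z ^ 2 - B * z + A > 0) ∧
    ∃ f : ℝ → ℝ, ContinuousOn f (Set.Icc (0:ℝ) 1) ∧
      ∀ z ∈ Set.Ioo (0:ℝ) 1,
        f z = ((1 + 1 / lam) * z - r + Real.sqrt (C * z ^ 2 - B * z + A)) /
          (z * (1 - z)) := by
  have hlt0 : 0 < lam * θ := mul_pos hlam0 hθ0
  have hrpos : 0 < r := by rw [hr]; positivity
  have hp0 : (0:ℝ) < 1 - θ := by linarith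
  have hq0 : (0:ℝ) < 1 - lam * θ := by nlinarith
  have hw0 : (0:ℝ) < 1 - θ * (lam + 1) := by linarith
  set u : ℝ := 1 / lam with hu
  have hu1 : (1:ℝ) < u := by rw [hu, lt_div_iff₀ hlam0]; linarith
  have hBu : B = 2 * (r + (r - 2) * u) := by rw [hB, hu]; ring
  have hCu : C = (1 - u) ^ 2 := hC
  set s1 : ℝ := r - 1 - u with hs1def
  have hs1val : s1 = (1 - θ * (lam + 1)) / (lam * θ) := by
    rw [hs1def, hr, hu]; field_simp; ring
  have hs1pos : 0 < s1 := by rw [hs1val]; positivity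
  have hs1sq : s1 ^ 2 = C - B + A := by rw [hs1def, hA, hBu, hCu]; ring
  have hr1u : 1 + u < r := by simp only [hs1def] at hs1pos; linarith
  have hC0 : 0 ≤ C := by rw [hCu]; positivity
  have hB2C : 2 * C + 4 * u ≤ B := by rw [hBu, hCu]; nlinarith
  have hBpos : 0 < B := by nlinarith
  have h2AB : B < 2 * A := by rw [hA, hBu]; nlinarith
  -- Part 2 : positivity of the quadratic
  have hQpos : ∀ z ∈ Set.Icc (0:ℝ) 1, 0 < C * z ^ 2 - B * z + A := by
    intro z hz
    obtain ⟨hz0, hz1⟩ := hz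
    have expand : C * z ^ 2 - B * z + A - s1 ^ 2 = (1 - z) * (B - C * (1 + z)) := by
      rw [hs1sq]; ring
    have hC2 : C * (1 + z) ≤ C * 2 := mul_le_mul_of_nonneg_left (by linarith) hC0
    have hBC : (0:ℝ) ≤ B - C * (1 + z) := by linarith [hu1]
    have key : s1 ^ 2 ≤ C * z ^ 2 - B * z + A := by
      nlinarith [mul_nonneg (sub_nonneg.2 hz1) hBC]
    nlinarith [sq_nonneg s1, hs1pos]
  -- the continuous extension of the integrand
  set g : ℝ → ℝ := fun z =>
    4 * u / (Real.sqrt (C * z ^ 2 - B * z + A) + r - (1 + u) * z) with hg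
  have hcontQ : Continuous fun z : ℝ => C * z ^ 2 - B * z + A := by continuity
  have hconts : Continuous fun z : ℝ => Real.sqrt (C * z ^ 2 - B * z + A) :=
    Real.continuous_sqrt.comp hcontQ
  have hdenpos : ∀ z ∈ Set.Icc (0:ℝ) 1,
      0 < Real.sqrt (C * z ^ 2 - B * z + A) + r - (1 + u) * z := by
    intro z hz
    obtain ⟨hz0, hz1⟩ := hz
    have h1 : (1 + u) * z ≤ (1 + u) * 1 := by
      apply mul_le_mul_of_nonneg_left hz1; linarith
    have h2 : (0:ℝ) ≤ Real.sqrt (C * z ^ 2 - B * z + A) := Real.sqrt_nonneg _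
    simp only [hs1def] at hs1pos
    linarith
  have hgcont : ContinuousOn g (Set.Icc (0:ℝ) 1) := by
    apply ContinuousOn.div continuousOn_const
    · exact ((hconts.add continuous_const).sub
        (continuous_const.mul continuous_id)).continuousOn
    · intro z hz; exact (hdenpos z hz).ne'
  have hgeq : ∀ z ∈ Set.Ioo (0:ℝ) 1,
      g z = ((1 + u) * z - r + Real.sqrt (C * z ^ 2 - B * z + A)) / (z * (1 - z)) := by
    intro z hz
    obtain ⟨hz0, hz1⟩ := hz
    have hQz := hQpos z ⟨hz0.le, hz1.le⟩
    have hs2 : Real.sqrt (C * z ^ 2 - B * z + A) ^ 2 = C * z ^ 2 - B * z + A :=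
      Real.sq_sqrt hQz.le
    have hden := hdenpos z ⟨hz0.le, hz1.le⟩
    rw [hg]
    rw [div_eq_div_iff hden.ne' (mul_pos hz0 (by linarith)).ne']
    linear_combination (-1) * hs2 - hA + z * hBu - z ^ 2 * hCu
  -- the antiderivative
  set F : ℝ → ℝ := fun z =>
    -r * Real.log (2 * A - B * z + 2 * r * Real.sqrt (C * z ^ 2 - B * z + A)) +
      (u - 1) * Real.log (B - 2 * C * z + 2 * (u - 1) * Real.sqrt (C * z ^ 2 - B * z + A)) +
      s1 * Real.log (2 * s1 ^ 2 - (2 * C - B) * (1 - z) +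
        2 * s1 * Real.sqrt (C * z ^ 2 - B * z + A)) with hF
  have hL1pos : ∀ z ∈ Set.Icc (0:ℝ) 1,
      0 < 2 * A - B * z + 2 * r * Real.sqrt (C * z ^ 2 - B * z + A) := by
    intro z hz
    obtain ⟨hz0, hz1⟩ := hz
    nlinarith [mul_le_mul_of_nonneg_left hz1 hBpos.le,
      mul_nonneg hrpos.le (Real.sqrt_nonneg (C * z ^ 2 - B * z + A))]
  have hL2pos : ∀ z ∈ Set.Icc (0:ℝ) 1,
      0 < B - 2 * C * z + 2 * (u - 1) * Real.sqrt (C * z ^ 2 - B * z + A) := by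
    intro z hz
    obtain ⟨hz0, hz1⟩ := hz
    nlinarith [mul_le_mul_of_nonneg_left hz1 (by linarith : (0:ℝ) ≤ 2 * C),
      mul_nonneg (by linarith : (0:ℝ) ≤ u - 1) (Real.sqrt_nonneg (C * z ^ 2 - B * z + A)),
      hu1]
  have hL3pos : ∀ z ∈ Set.Icc (0:ℝ) 1,
      0 < 2 * s1 ^ 2 - (2 * C - B) * (1 - z) +
        2 * s1 * Real.sqrt (C * z ^ 2 - B * z + A) := by
    intro z hz
    obtain ⟨hz0, hz1⟩ := hz
    nlinarith [mul_nonneg (by linarith : (0:ℝ) ≤ B - 2 * C) (by linarith : (0:ℝ) ≤ 1 - z),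
      mul_nonneg hs1pos.le (Real.sqrt_nonneg (C * z ^ 2 - B * z + A)),
      sq_nonneg s1, hs1pos]
  have hcontL1 : Continuous fun z : ℝ =>
      2 * A - B * z + 2 * r * Real.sqrt (C * z ^ 2 - B * z + A) :=
    (continuous_const.sub (continuous_const.mul continuous_id)).add
      (continuous_const.mul hconts)
  have hcontL2 : Continuous fun z : ℝ =>
      B - 2 * C * z + 2 * (u - 1) * Real.sqrt (C * z ^ 2 - B * z + A) :=
    (continuous_const.sub (continuous_const.mul continuous_id)).add
      (continuous_const.mul hconts)
  have hcontL3 : Continuous fun z : ℝ =>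
      2 * s1 ^ 2 - (2 * C - B) * (1 - z) +
        2 * s1 * Real.sqrt (C * z ^ 2 - B * z + A) :=
    (continuous_const.sub (continuous_const.mul (continuous_const.sub continuous_id))).add
      (continuous_const.mul hconts)
  have hFcont : ContinuousOn F (Set.Icc (0:ℝ) 1) := by
    rw [hF]
    apply ContinuousOn.add
    apply ContinuousOn.add
    · exact continuousOn_const.mul
        (hcontL1.continuousOn.log fun z hz => (hL1pos z hz).ne')
    · exact continuousOn_const.mul
        (hcontL2.continuousOn.log fun z hz => (hL2pos z hz).ne')
    · exact continuousOn_const.mul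
        (hcontL3.continuousOn.log fun z hz => (hL3pos z hz).ne')
  have hFderiv : ∀ z ∈ Set.Ioo (0:ℝ) 1, HasDerivAt F (g z) z := by
    intro z hz
    obtain ⟨hz0, hz1⟩ := hz
    have hzIcc : z ∈ Set.Icc (0:ℝ) 1 := ⟨hz0.le, hz1.le⟩
    have hQz := hQpos z hzIcc
    have hs0 : 0 < Real.sqrt (C * z ^ 2 - B * z + A) := Real.sqrt_pos.2 hQz
    have hs2 : Real.sqrt (C * z ^ 2 - B * z + A) ^ 2 = C * z ^ 2 - B * z + A :=
      Real.sq_sqrt hQz.le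
    have hL1z := hL1pos z hzIcc
    have hL2z := hL2pos z hzIcc
    have hL3z := hL3pos z hzIcc
    have hpoly : HasDerivAt (fun y : ℝ => C * y ^ 2 - B * y + A) (2 * C * z - B) z := by
      have h := (((hasDerivAt_pow 2 z).const_mul C).sub
        ((hasDerivAt_id z).const_mul B)).add_const A
      refine h.congr_deriv ?_
      push_cast
      ring
    have hsd : HasDerivAt (fun y : ℝ => Real.sqrt (C * y ^ 2 - B * y + A))
        ((2 * C * z - B) / (2 * Real.sqrt (C * z ^ 2 - B * z + A))) z :=
      hpoly.sqrt hQz.ne'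
    have hd1 : HasDerivAt (fun y : ℝ =>
        2 * A - B * y + 2 * r * Real.sqrt (C * y ^ 2 - B * y + A))
        (-(B * 1) + 2 * r * ((2 * C * z - B) / (2 * Real.sqrt (C * z ^ 2 - B * z + A)))) z :=
      (((hasDerivAt_id z).const_mul B).const_sub (2 * A)).add (hsd.const_mul (2 * r))
    have hd2 : HasDerivAt (fun y : ℝ =>
        B - 2 * C * y + 2 * (u - 1) * Real.sqrt (C * y ^ 2 - B * y + A))
        (-(2 * C * 1) + 2 * (u - 1) *
          ((2 * C * z - B) / (2 * Real.sqrt (C * z ^ 2 - B * z + A)))) z :=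
      (((hasDerivAt_id z).const_mul (2 * C)).const_sub B).add (hsd.const_mul (2 * (u - 1)))
    have hd3 : HasDerivAt (fun y : ℝ =>
        2 * s1 ^ 2 - (2 * C - B) * (1 - y) + 2 * s1 * Real.sqrt (C * y ^ 2 - B * y + A))
        (-((2 * C - B) * -1) + 2 * s1 *
          ((2 * C * z - B) / (2 * Real.sqrt (C * z ^ 2 - B * z + A)))) z :=
      ((((hasDerivAt_id z).const_sub 1).const_mul (2 * C - B)).const_sub (2 * s1 ^ 2)).add
        (hsd.const_mul (2 * s1))
    have hlog1 := (hd1.log hL1z.ne').const_mul (-r)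
    have hlog2 := (hd2.log hL2z.ne').const_mul (u - 1)
    have hlog3 := (hd3.log hL3z.ne').const_mul s1
    have hder := (hlog1.add hlog2).add hlog3
    have hval :
        -r * ((-(B * 1) + 2 * r * ((2 * C * z - B) /
              (2 * Real.sqrt (C * z ^ 2 - B * z + A)))) /
            (2 * A - B * z + 2 * r * Real.sqrt (C * z ^ 2 - B * z + A))) +
          (u - 1) * ((-(2 * C * 1) + 2 * (u - 1) * ((2 * C * z - B) /
              (2 * Real.sqrt (C * z ^ 2 - B * z + A)))) /
            (B - 2 * C * z + 2 * (u - 1) * Real.sqrt (C * z ^ 2 - B * z + A))) +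
          s1 * ((-((2 * C - B) * -1) + 2 * s1 * ((2 * C * z - B) /
              (2 * Real.sqrt (C * z ^ 2 - B * z + A)))) /
            (2 * s1 ^ 2 - (2 * C - B) * (1 - z) +
              2 * s1 * Real.sqrt (C * z ^ 2 - B * z + A))) = g z := by
      have e1 : (-(B * 1) + 2 * r * ((2 * C * z - B) /
              (2 * Real.sqrt (C * z ^ 2 - B * z + A)))) /
            (2 * A - B * z + 2 * r * Real.sqrt (C * z ^ 2 - B * z + A)) =
          (Real.sqrt (C * z ^ 2 - B * z + A) - r) /
            (z * Real.sqrt (C * z ^ 2 - B * z + A)) := by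
        rw [div_eq_div_iff hL1z.ne' (mul_pos hz0 hs0).ne']
        generalize Real.sqrt (C * z ^ 2 - B * z + A) = S at hs0 hs2 ⊢
        field_simp
        linear_combination (-2 * r) * hs2 - (2 * S) * hA
      have e2 : (-(2 * C * 1) + 2 * (u - 1) * ((2 * C * z - B) /
              (2 * Real.sqrt (C * z ^ 2 - B * z + A)))) /
            (B - 2 * C * z + 2 * (u - 1) * Real.sqrt (C * z ^ 2 - B * z + A)) =
          -(u - 1) / Real.sqrt (C * z ^ 2 - B * z + A) := by
        rw [div_eq_div_iff hL2z.ne' hs0.ne']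
        generalize Real.sqrt (C * z ^ 2 - B * z + A) = S at hs0 hs2 ⊢
        field_simp
        linear_combination (-2 * S) * hCu
      have e3 : (-((2 * C - B) * -1) + 2 * s1 * ((2 * C * z - B) /
              (2 * Real.sqrt (C * z ^ 2 - B * z + A)))) /
            (2 * s1 ^ 2 - (2 * C - B) * (1 - z) +
              2 * s1 * Real.sqrt (C * z ^ 2 - B * z + A)) =
          (s1 - Real.sqrt (C * z ^ 2 - B * z + A)) /
            ((1 - z) * Real.sqrt (C * z ^ 2 - B * z + A)) := by
        rw [div_eq_div_iff hL3z.ne'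
          (mul_pos (show (0:ℝ) < 1 - z by linarith) hs0).ne']
        generalize Real.sqrt (C * z ^ 2 - B * z + A) = S at hs0 hs2 ⊢
        field_simp
        linear_combination (2 * s1) * hs2 - (2 * s1) * hs1sq
      rw [e1, e2, e3, hgeq z ⟨hz0, hz1⟩]
      have h1z : (1:ℝ) - z ≠ 0 := sub_ne_zero.mpr hz1.ne'
      generalize Real.sqrt (C * z ^ 2 - B * z + A) = S at hs0 hs2 ⊢
      field_simp [hz0.ne', hs0.ne', h1z]
      linear_combination (-1) * hs2 - z ^ 2 * hCu + z * hBu - hA +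
        (z * (s1 + r - 1 - u) - S * z) * hs1def
    exact hF ▸ hder.congr_deriv hval
  have huIcc : Set.uIcc (0:ℝ) 1 = Set.Icc 0 1 := Set.uIcc_of_le zero_le_one
  have hgint : IntervalIntegrable g MeasureTheory.volume 0 1 := by
    have : ContinuousOn g (Set.uIcc (0:ℝ) 1) := by rw [huIcc]; exact hgcont
    exact this.intervalIntegrable
  have hFTC : (∫ z in (0:ℝ)..1, g z) = F 1 - F 0 :=
    intervalIntegral.integral_eq_sub_of_hasDerivAt_of_le zero_le_one hFcont hFderiv hgint
  have hae : (∫ z in (0:ℝ)..1,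
      ((1 + u) * z - r + Real.sqrt (C * z ^ 2 - B * z + A)) / (z * (1 - z))) =
      ∫ z in (0:ℝ)..1, g z := by
    apply intervalIntegral.integral_congr_ae
    rw [MeasureTheory.ae_iff]
    refine MeasureTheory.measure_mono_null ?_ (MeasureTheory.measure_singleton (1:ℝ))
    intro x hx
    simp only [Set.mem_setOf_eq] at hx
    push_neg at hx
    obtain ⟨hmem, hne⟩ := hx
    rw [Set.uIoc_of_le zero_le_one] at hmem
    rcases eq_or_lt_of_le hmem.2 with h | h
    · simp [h]
    · exact absurd (hgeq x ⟨hmem.1, h⟩).symm hne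
  -- endpoint values of the square root
  have hsq0 : Real.sqrt (C * 0 ^ 2 - B * 0 + A) = r := by
    rw [show C * 0 ^ 2 - B * 0 + A = r ^ 2 by rw [hA]; ring, Real.sqrt_sq hrpos.le]
  have hsq1 : Real.sqrt (C * 1 ^ 2 - B * 1 + A) = s1 := by
    rw [show C * 1 ^ 2 - B * 1 + A = s1 ^ 2 by rw [hs1sq]; ring, Real.sqrt_sq hs1pos.le]
  have hF1 : F 1 = -r * Real.log (2 * A - B * 1 + 2 * r * s1) +
      (u - 1) * Real.log (B - 2 * C * 1 + 2 * (u - 1) * s1) +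
      s1 * Real.log (2 * s1 ^ 2 - (2 * C - B) * (1 - 1) + 2 * s1 * s1) := by
    simp only [hF, hsq1]
  have hF0 : F 0 = -r * Real.log (2 * A - B * 0 + 2 * r * r) +
      (u - 1) * Real.log (B - 2 * C * 0 + 2 * (u - 1) * r) +
      s1 * Real.log (2 * s1 ^ 2 - (2 * C - B) * (1 - 0) + 2 * s1 * r) := by
    simp only [hF, hsq0]
  -- positivity of the endpoint arguments
  have hb1 : 0 < 2 * A - B * 0 + 2 * r * r := by
    have := hL1pos 0 ⟨le_rfl, zero_le_one⟩; rwa [hsq0] at this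
  have ha1p : 0 < 2 * A - B * 1 + 2 * r * s1 := by
    have := hL1pos 1 ⟨zero_le_one, le_rfl⟩; rwa [hsq1] at this
  have hb2 : 0 < B - 2 * C * 0 + 2 * (u - 1) * r := by
    have := hL2pos 0 ⟨le_rfl, zero_le_one⟩; rwa [hsq0] at this
  have ha2p : 0 < B - 2 * C * 1 + 2 * (u - 1) * s1 := by
    have := hL2pos 1 ⟨zero_le_one, le_rfl⟩; rwa [hsq1] at this
  have hb3 : 0 < 2 * s1 ^ 2 - (2 * C - B) * (1 - 0) + 2 * s1 * r := by
    have := hL3pos 0 ⟨le_rfl, zero_le_one⟩; rwa [hsq0] at this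
  have ha3p : 0 < 2 * s1 ^ 2 - (2 * C - B) * (1 - 1) + 2 * s1 * s1 := by
    have := hL3pos 1 ⟨zero_le_one, le_rfl⟩; rwa [hsq1] at this
  -- the three endpoint identities
  have ha1 : 2 * A - B * 1 + 2 * r * s1 =
      (2 * A - B * 0 + 2 * r * r) * ((1 - θ) * (1 - lam * θ)) := by
    rw [hA, hBu, hs1def, hr, hu]; field_simp; ring
  have ha2 : (B - 2 * C * 1 + 2 * (u - 1) * s1) * (1 - lam * θ) =
      (B - 2 * C * 0 + 2 * (u - 1) * r) * (1 - θ) := by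
    rw [hBu, hCu, hs1def, hr, hu]; field_simp; ring
  have ha3 : (2 * s1 ^ 2 - (2 * C - B) * (1 - 1) + 2 * s1 * s1) * ((1 - θ) * (1 - lam * θ)) =
      (2 * s1 ^ 2 - (2 * C - B) * (1 - 0) + 2 * s1 * r) *
        ((1 - θ * (lam + 1)) * (1 - θ * (lam + 1))) := by
    rw [hBu, hCu, hs1def, hr, hu]; field_simp; ring
  -- log versions
  have hA1log : Real.log (2 * A - B * 1 + 2 * r * s1) =
      Real.log (2 * A - B * 0 + 2 * r * r) +
        (Real.log (1 - θ) + Real.log (1 - lam * θ)) := by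
    rw [ha1, Real.log_mul hb1.ne' (by positivity), Real.log_mul hp0.ne' hq0.ne']
  have hA2log : Real.log (B - 2 * C * 1 + 2 * (u - 1) * s1) =
      Real.log (B - 2 * C * 0 + 2 * (u - 1) * r) +
        (Real.log (1 - θ) - Real.log (1 - lam * θ)) := by
    have h := congrArg Real.log ha2
    rw [Real.log_mul ha2p.ne' hq0.ne', Real.log_mul hb2.ne' hp0.ne'] at h
    linarith
  have hA3log : Real.log (2 * s1 ^ 2 - (2 * C - B) * (1 - 1) + 2 * s1 * s1) =
      Real.log (2 * s1 ^ 2 - (2 * C - B) * (1 - 0) + 2 * s1 * r) +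
        (2 * Real.log (1 - θ * (lam + 1)) - Real.log (1 - θ) - Real.log (1 - lam * θ)) := by
    have h := congrArg Real.log ha3
    rw [Real.log_mul ha3p.ne' (by positivity), Real.log_mul hb3.ne' (by positivity),
      Real.log_mul hp0.ne' hq0.ne', Real.log_mul hw0.ne' hw0.ne'] at h
    linarith
  refine ⟨?_, hQpos, g, hgcont, hgeq⟩
  calc (∫ z in (0:ℝ)..1,
        ((1 + u) * z - r + Real.sqrt (C * z ^ 2 - B * z + A)) / (z * (1 - z)))
      = ∫ z in (0:ℝ)..1, g z := hae
    _ = F 1 - F 0 := hFTC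
    _ = -(2 / (lam * θ)) *
        ((1 - θ) * Real.log (1 - θ) + (1 - lam * θ) * Real.log (1 - lam * θ) -
          (1 - θ * (lam + 1)) * Real.log (1 - θ * (lam + 1))) := by
      rw [hF1, hF0, hA1log, hA2log, hA3log, hs1def, hr, hu]
      field_simp
      ring
end

section
/- Let θ ∈ (0, 1/2], set x_+ = 4θ(1-θ) and g(x) = √(x(x_+ - x))/(2πθ·x(1-x)) for x ∈ (0, x_+], and define the moments m_0 = 1 and m_n = ∫_0^{x_+} xⁿ g(x) dx for n ≥ 1. Then for every integer n ≥ 1, (1-θ)·m_n = θ·∑_{k=0}^{n-1} m_{n-k-1}(m_k - m_{k+1}). -/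
open Real MeasureTheory intervalIntegral Finset Set

lemma catalan_ratio (k : ℕ) :
    ((k:ℝ) + 3) * catalan (k + 2) = 2 * (2 * k + 3) * catalan (k + 1) := by
  have h1 : (k + 2 + 1) * catalan (k + 2) = Nat.centralBinom (k + 2) :=
    succ_mul_catalan_eq_centralBinom (k + 2)
  have h2 : (k + 1 + 1) * Nat.centralBinom (k + 1 + 1) = 2 * (2 * (k + 1) + 1) * Nat.centralBinom (k + 1) :=
    Nat.succ_mul_centralBinom_succ (k + 1)
  have h3 : (k + 1 + 1) * catalan (k + 1) = Nat.centralBinom (k + 1) :=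
    succ_mul_catalan_eq_centralBinom (k + 1)
  have key : (k + 2) * ((k + 3) * catalan (k + 2)) = (k + 2) * (2 * (2 * k + 3) * catalan (k + 1)) := by
    have e1 : (k + 2) * ((k + 3) * catalan (k + 2)) = (k+2) * ((k + 2 + 1) * catalan (k + 2)) := by ring_nf
    rw [e1, h1]
    have e2 : (k + 2) * Nat.centralBinom (k + 2) = (k + 1 + 1) * Nat.centralBinom (k + 1 + 1) := by ring_nf
    rw [e2, h2, ← h3]; ring
  have := Nat.eq_of_mul_eq_mul_left (show 0 < k + 2 by omega) key
  exact_mod_cast congrArg (Nat.cast : ℕ → ℝ) this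

lemma sqrt_hasDeriv {b x : ℝ} (hx : 0 < x) (hxb : x < b) :
    HasDerivAt (fun y => Real.sqrt (y * (b - y))) ((b - 2*x) / (2 * Real.sqrt (x * (b - x)))) x := by
  have hpos : 0 < x * (b - x) := mul_pos hx (by linarith)
  have hinner : HasDerivAt (fun y : ℝ => y * (b - y)) (b - 2*x) x := by
    have := (hasDerivAt_id x).mul ((hasDerivAt_const x b).sub (hasDerivAt_id x))
    refine this.congr_deriv ?_
    simp; ring
  exact hinner.sqrt (ne_of_gt hpos)

lemma arcsin1_hasDeriv {b x : ℝ} (hb : 0 < b) (hx : 0 < x) (hxb : x < b) :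
    HasDerivAt (fun y => Real.arcsin ((2*y - b)/b)) (1 / Real.sqrt (x * (b - x))) x := by
  have hpos : 0 < x * (b - x) := mul_pos hx (by linarith)
  have hs : 0 < Real.sqrt (x * (b - x)) := Real.sqrt_pos.mpr hpos
  have harg : -1 < (2*x - b)/b ∧ (2*x - b)/b < 1 := by
    constructor
    · rw [lt_div_iff₀ hb]; linarith
    · rw [div_lt_iff₀ hb]; linarith
  have hinner : HasDerivAt (fun y : ℝ => (2*y - b)/b) (2/b) x := by
    have : HasDerivAt (fun y : ℝ => (2*y - b)) 2 x := by
      simpa using ((hasDerivAt_id x).const_mul 2).sub_const b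
    simpa using this.div_const b
  have H := (Real.hasDerivAt_arcsin (ne_of_gt harg.1) (ne_of_lt harg.2)).comp x hinner
  refine H.congr_deriv (Eq.symm ?_)
  have h1 : 1 - ((2*x - b)/b)^2 = (2 * Real.sqrt (x*(b-x)) / b)^2 := by
    have e : (2 * Real.sqrt (x*(b-x)) / b)^2 = 4 * (x*(b-x)) / b^2 := by
      rw [div_pow, mul_pow, Real.sq_sqrt hpos.le]; ring
    rw [e]; field_simp; ring
  rw [h1, Real.sqrt_sq (by positivity), one_div_div, div_mul_div_comm]
  rw [div_eq_div_iff hs.ne' (by positivity)]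
  ring

lemma sqrt_cont {b : ℝ} : Continuous (fun y : ℝ => Real.sqrt (y * (b - y))) := by
  fun_prop

lemma integral_I0 {b : ℝ} (hb : 0 < b) :
    ∫ x in (0:ℝ)..b, Real.sqrt (x * (b - x)) = π * b^2 / 8 := by
  set F : ℝ → ℝ := fun y => (2*y - b)/4 * Real.sqrt (y * (b - y))
      + b^2/8 * Real.arcsin ((2*y - b)/b) with hF
  have hcont : ContinuousOn F (Icc 0 b) := by
    apply Continuous.continuousOn
    apply Continuous.add
    · exact (by fun_prop : Continuous fun y : ℝ => (2*y - b)/4).mul sqrt_cont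
    · exact continuous_const.mul (Real.continuous_arcsin.comp (by fun_prop))
  have hderiv : ∀ x ∈ Ioo (0:ℝ) b, HasDerivWithinAt F (Real.sqrt (x * (b - x))) (Ioi x) x := by
    intro x hx
    obtain ⟨hx0, hxb⟩ := hx
    have hpos : 0 < x * (b - x) := mul_pos hx0 (by linarith)
    have hs : 0 < Real.sqrt (x * (b - x)) := Real.sqrt_pos.mpr hpos
    have hs2 : Real.sqrt (x * (b - x)) ^ 2 = x * (b - x) := Real.sq_sqrt hpos.le
    have t1 : HasDerivAt (fun y => (2*y - b)/4 * Real.sqrt (y * (b - y)))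
        (2/4 * Real.sqrt (x * (b - x)) + (2*x - b)/4 * ((b - 2*x) / (2 * Real.sqrt (x * (b - x))))) x := by
      have hl : HasDerivAt (fun y : ℝ => (2*y - b)/4) (2/4) x := by
        have : HasDerivAt (fun y : ℝ => (2*y - b)) 2 x := by
          simpa using ((hasDerivAt_id x).const_mul 2).sub_const b
        simpa using this.div_const 4
      exact hl.mul (sqrt_hasDeriv hx0 hxb)
    have t2 : HasDerivAt (fun y => b^2/8 * Real.arcsin ((2*y - b)/b))
        (b^2/8 * (1 / Real.sqrt (x * (b - x)))) x :=
      (arcsin1_hasDeriv hb hx0 hxb).const_mul (b^2/8)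
    have := (t1.add t2)
    set s := Real.sqrt (x * (b - x)) with hsdef
    have heq : 2/4 * s + (2*x - b)/4 * ((b - 2*x) / (2 * s)) + b^2/8 * (1 / s) = s := by
      field_simp
      nlinarith [hs2]
    rw [heq] at this
    exact this.hasDerivWithinAt
  have hint : IntervalIntegrable (fun x => Real.sqrt (x * (b - x))) volume 0 b :=
    sqrt_cont.intervalIntegrable 0 b
  have := integral_eq_sub_of_hasDeriv_right_of_le hb.le hcont hderiv hint
  rw [this, hF]
  simp only []
  rw [show b * (b - b) = 0 by ring, show (0:ℝ) * (b - 0) = 0 by ring, Real.sqrt_zero]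
  rw [show (2*b - b)/b = 1 by rw [show 2*b-b = b by ring, div_self hb.ne'],
     show (2*0 - b)/b = -1 by rw [show 2*0-b = -b by ring, neg_div, div_self hb.ne']]
  rw [Real.arcsin_one, Real.arcsin_neg_one]
  ring

lemma integral_Irec {b : ℝ} (hb : 0 < b) (k : ℕ) :
    (2*(k:ℝ)+3)/2 * b * ∫ x in (0:ℝ)..b, x^k * Real.sqrt (x*(b-x))
      = ((k:ℝ)+3) * ∫ x in (0:ℝ)..b, x^(k+1) * Real.sqrt (x*(b-x)) := by
  set F : ℝ → ℝ := fun y => (b*y^(k+1) - y^(k+2)) * Real.sqrt (y*(b-y)) with hF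
  set f : ℝ → ℝ := fun x => (2*(k:ℝ)+3)/2*b*(x^k*Real.sqrt (x*(b-x)))
      - ((k:ℝ)+3)*(x^(k+1)*Real.sqrt (x*(b-x))) with hf
  have hcont : ContinuousOn F (Icc 0 b) := Continuous.continuousOn (by fun_prop)
  have hderiv : ∀ x ∈ Ioo (0:ℝ) b, HasDerivWithinAt F (f x) (Ioi x) x := by
    intro x hx
    obtain ⟨hx0, hxb⟩ := hx
    have hpos : 0 < x * (b - x) := mul_pos hx0 (by linarith)
    have hs : 0 < Real.sqrt (x * (b - x)) := Real.sqrt_pos.mpr hpos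
    have t1 : HasDerivAt (fun y : ℝ => b*y^(k+1) - y^(k+2))
        (b*((k:ℝ)+1)*x^k - ((k:ℝ)+2)*x^(k+1)) x := by
      have h1 := (hasDerivAt_pow (k+1) x).const_mul b
      have h2 := hasDerivAt_pow (k+2) x
      refine (h1.sub h2).congr_deriv ?_
      push_cast; ring
    have prod := t1.mul (sqrt_hasDeriv hx0 hxb)
    set s := Real.sqrt (x * (b - x)) with hsdef
    have hs2 : s^2 = x*(b-x) := Real.sq_sqrt hpos.le
    have heq : (b*((k:ℝ)+1)*x^k - ((k:ℝ)+2)*x^(k+1)) * s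
        + (b*x^(k+1) - x^(k+2)) * ((b - 2*x)/(2*s)) = f x := by
      have e1 : (b*x^(k+1) - x^(k+2)) * ((b - 2*x)/(2*s)) = x^k*(b-2*x)/2 * s := by
        rw [div_mul_eq_mul_div, mul_comm, div_mul_eq_mul_div, div_eq_div_iff (by positivity) (by positivity)]
        linear_combination (x^k*(b-2*x) + 3*x^k*(2*x-b)) * hs2
      rw [e1, hf]
      ring
    rw [heq] at prod
    exact prod.hasDerivWithinAt
  have hint : IntervalIntegrable f volume 0 b := by
    apply Continuous.intervalIntegrable
    rw [hf]; fun_prop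
  have h0 := integral_eq_sub_of_hasDeriv_right_of_le hb.le hcont hderiv hint
  have hFb : F b = 0 := by
    rw [hF]; simp only []
    rw [show b*b^(k+1) - b^(k+2) = 0 by rw [pow_succ]; ring]
    simp
  have hF0 : F 0 = 0 := by
    rw [hF]; simp only []
    rw [show b*(0:ℝ)^(k+1) - (0:ℝ)^(k+2) = 0 by simp]
    simp
  rw [hFb, hF0, sub_zero] at h0
  have hsplit : ∫ x in (0:ℝ)..b, f x
      = (2*(k:ℝ)+3)/2*b * (∫ x in (0:ℝ)..b, x^k*Real.sqrt (x*(b-x)))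
        - ((k:ℝ)+3) * (∫ x in (0:ℝ)..b, x^(k+1)*Real.sqrt (x*(b-x))) := by
    rw [hf]
    rw [intervalIntegral.integral_sub (by apply Continuous.intervalIntegrable; fun_prop)
      (by apply Continuous.intervalIntegrable; fun_prop),
      intervalIntegral.integral_const_mul, intervalIntegral.integral_const_mul]
  rw [hsplit] at h0
  linarith

lemma integral_Iformula {b : ℝ} (hb : 0 < b) (k : ℕ) :
    ∫ x in (0:ℝ)..b, x^k * Real.sqrt (x*(b-x)) = 2*π*(catalan (k+1)) * (b/4)^(k+2) := by
  induction k with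
  | zero =>
    simp only [pow_zero, one_mul]
    rw [integral_I0 hb, catalan_one]
    push_cast; ring
  | succ k ih =>
    have hrec := integral_Irec hb k
    rw [ih] at hrec
    have hk3 : ((k:ℝ)+3) ≠ 0 := by positivity
    apply mul_left_cancel₀ hk3
    rw [← hrec, pow_succ _ (k+2)]
    linear_combination (-(2*π*(b/4)^(k+2)*(b/4))) * catalan_ratio k

lemma arcsin2_hasDeriv {b x : ℝ} (hb : 0 < b) (hb1 : b < 1) (hx : 0 < x) (hxb : x < b) :
    HasDerivAt (fun y => Real.arcsin (((2-b)*y - b)/(b*(1-y))))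
      (Real.sqrt (1-b)/((1-x)*Real.sqrt (x*(b-x)))) x := by
  have hx1 : x < 1 := lt_of_lt_of_le hxb hb1.le
  have hD : 0 < b*(1-x) := mul_pos hb (by linarith)
  have hpos : 0 < x * (b - x) := mul_pos hx (by linarith)
  have hs : 0 < Real.sqrt (x * (b - x)) := Real.sqrt_pos.mpr hpos
  have hs2 : Real.sqrt (x * (b - x))^2 = x*(b-x) := Real.sq_sqrt hpos.le
  have h1b : 0 < Real.sqrt (1-b) := Real.sqrt_pos.mpr (by linarith)
  have h1b2 : Real.sqrt (1-b)^2 = 1-b := Real.sq_sqrt (by linarith)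
  have hφ : HasDerivAt (fun y : ℝ => ((2-b)*y - b)/(b*(1-y))) (2*(1-b)/(b*(1-x)^2)) x := by
    have hN : HasDerivAt (fun y : ℝ => (2-b)*y - b) (2-b) x := by
      simpa using ((hasDerivAt_id x).const_mul (2-b)).sub_const b
    have hDenom : HasDerivAt (fun y : ℝ => b*(1-y)) (-b) x := by
      have : HasDerivAt (fun y : ℝ => 1-y) (-1) x := by
        exact ((hasDerivAt_const x (1:ℝ)).sub (hasDerivAt_id x)).congr_deriv (by simp)
      simpa using this.const_mul b
    have := hN.div hDenom hD.ne'
    refine this.congr_deriv (Eq.symm ?_)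
    rw [div_eq_div_iff (mul_pos hb (pow_pos (by linarith : (0:ℝ) < 1-x) 2)).ne' (pow_pos hD 2).ne']
    ring
  have hlow : -1 < ((2-b)*x - b)/(b*(1-x)) := by
    rw [lt_div_iff₀ hD]; nlinarith
  have hup : ((2-b)*x - b)/(b*(1-x)) < 1 := by
    rw [div_lt_iff₀ hD]; nlinarith
  have H := (Real.hasDerivAt_arcsin (ne_of_gt hlow) (ne_of_lt hup)).comp x hφ
  refine H.congr_deriv (Eq.symm ?_)
  have hroot : 1 - (((2-b)*x - b)/(b*(1-x)))^2
      = (2 * Real.sqrt (x*(b-x)) * Real.sqrt (1-b) / (b*(1-x)))^2 := by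
    have e : (2 * Real.sqrt (x*(b-x)) * Real.sqrt (1-b) / (b*(1-x)))^2
        = 4 * (x*(b-x)) * (1-b) / (b*(1-x))^2 := by
      rw [div_pow, mul_pow, mul_pow, hs2, h1b2]; ring
    rw [e]; field_simp [hb.ne', sub_ne_zero.mpr hx1.ne']; ring
  rw [hroot, Real.sqrt_sq (div_nonneg (by positivity) hD.le), one_div_div, div_mul_div_comm]
  rw [div_eq_div_iff ((mul_pos (by linarith : (0:ℝ) < 1-x) hs).ne')
    ((mul_pos (mul_pos (mul_pos two_pos hs) h1b) (mul_pos hb (pow_pos (by linarith : (0:ℝ) < 1-x) 2))).ne')]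
  linear_combination (2 * Real.sqrt (x*(b-x)) * b * (1-x)^2) * h1b2

lemma f_integrable {b : ℝ} (hb : 0 < b) (hb1 : b ≤ 1) :
    IntervalIntegrable (fun x => Real.sqrt (x*(b-x))/(1-x)) volume 0 b := by
  rcases lt_or_eq_of_le hb1 with hlt | heq
  · apply ContinuousOn.intervalIntegrable
    apply ContinuousOn.div
    · exact sqrt_cont.continuousOn
    · fun_prop
    · intro x hx
      rw [uIcc_of_le hb.le] at hx
      have : x ≤ b := hx.2
      intro h; nlinarith [hx.1]
  · -- b = 1 : dominate by (1-x)^(-1/2)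
    subst heq
    have hg : IntervalIntegrable (fun x : ℝ => (1-x) ^ (-(1/2) : ℝ)) volume 0 1 := by
      have h := intervalIntegrable_rpow' (a := 0) (b := 1) (r := -(1/2)) (by norm_num)
      simpa using (h.comp_sub_left 1).symm
    apply hg.mono_fun
    · apply Measurable.aestronglyMeasurable
      exact (Real.continuous_sqrt.measurable.comp (measurable_id.mul (measurable_const.sub measurable_id))).div
        (measurable_const.sub measurable_id)
    · rw [Filter.EventuallyLE, ae_restrict_iff' measurableSet_uIoc]
      filter_upwards [] with x hx
      rw [uIoc_of_le (by norm_num : (0:ℝ) ≤ 1)] at hx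
      obtain ⟨hx0, hx1⟩ := hx
      rw [Real.norm_eq_abs, Real.norm_eq_abs]
      rcases eq_or_lt_of_le hx1 with h1 | h1
      · subst h1
        norm_num [Real.zero_rpow]
      · have h1x : 0 < 1 - x := by linarith
        have hs1 : 0 < Real.sqrt (1-x) := Real.sqrt_pos.mpr h1x
        rw [abs_of_nonneg (by positivity), abs_of_nonneg (by positivity)]
        rw [Real.rpow_neg h1x.le, ← Real.sqrt_eq_rpow]
        rw [Real.sqrt_mul hx0.le]
        rw [div_le_iff₀ h1x]
        have e : (Real.sqrt (1-x))⁻¹ * (1-x) = Real.sqrt (1-x) := by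
          rw [inv_mul_eq_div, div_eq_iff hs1.ne', Real.mul_self_sqrt h1x.le]
        rw [e]
        exact mul_le_of_le_one_left (Real.sqrt_nonneg _) (Real.sqrt_le_one.mpr hx1)

lemma integral_T {b : ℝ} (hb : 0 < b) (hb1 : b ≤ 1) :
    ∫ x in (0:ℝ)..b, Real.sqrt (x*(b-x))/(1-x) = π*(1 - b/2 - Real.sqrt (1-b)) := by
  set F : ℝ → ℝ := fun y => (1-b/2) * Real.arcsin ((2*y-b)/b) - Real.sqrt (y*(b-y))
      - Real.sqrt (1-b) * Real.arcsin (((2-b)*y - b)/(b*(1-y))) with hF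
  have hcont : ContinuousOn F (Icc 0 b) := by
    apply ContinuousOn.sub
    · apply ContinuousOn.sub
      · exact Continuous.continuousOn (continuous_const.mul (Real.continuous_arcsin.comp (by fun_prop)))
      · exact sqrt_cont.continuousOn
    · rcases lt_or_eq_of_le hb1 with hlt | heq
      · apply ContinuousOn.mul continuousOn_const
        apply Real.continuous_arcsin.comp_continuousOn
        apply ContinuousOn.div (by fun_prop) (by fun_prop)
        intro x hx
        have h1 : x ≤ b := hx.2
        exact (mul_pos hb (by linarith : (0:ℝ) < 1-x)).ne'
      · have hzero : Real.sqrt (1-b) = 0 := by rw [← heq]; simp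
        simp only [hzero, zero_mul]
        exact continuousOn_const
  have hderiv : ∀ x ∈ Ioo (0:ℝ) b, HasDerivWithinAt F (Real.sqrt (x*(b-x))/(1-x)) (Ioi x) x := by
    intro x hx
    obtain ⟨hx0, hxb⟩ := hx
    have hx1 : x < 1 := lt_of_lt_of_le hxb hb1
    have hpos : 0 < x*(b-x) := mul_pos hx0 (by linarith)
    have t1 : HasDerivAt (fun y => (1-b/2) * Real.arcsin ((2*y-b)/b))
        ((1-b/2) * (1/Real.sqrt (x*(b-x)))) x := (arcsin1_hasDeriv hb hx0 hxb).const_mul _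
    have t2 := sqrt_hasDeriv hx0 hxb
    have t3 : HasDerivAt (fun y => Real.sqrt (1-b) * Real.arcsin (((2-b)*y - b)/(b*(1-y))))
        (Real.sqrt (1-b) * (Real.sqrt (1-b)/((1-x)*Real.sqrt (x*(b-x))))) x := by
      rcases lt_or_eq_of_le hb1 with hlt | heqb
      · exact (arcsin2_hasDeriv hb hlt hx0 hxb).const_mul _
      · have hzero : Real.sqrt (1-b) = 0 := by rw [← heqb]; simp
        simp only [hzero, zero_mul]
        exact hasDerivAt_const x 0
    have H := (t1.sub t2).sub t3
    set s := Real.sqrt (x*(b-x)) with hsdef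
    set u := Real.sqrt (1-b) with hudef
    have hs : 0 < s := Real.sqrt_pos.mpr hpos
    have hs2 : s^2 = x*(b-x) := Real.sq_sqrt hpos.le
    have hu2 : u^2 = 1-b := Real.sq_sqrt (by linarith)
    have h1x : (1:ℝ) - x ≠ 0 := ne_of_gt (by linarith : (0:ℝ) < 1 - x)
    have heq2 : (1-b/2) * (1/s) - (b-2*x)/(2*s) - u * (u/((1-x)*s)) = s/(1-x) := by
      field_simp [hs.ne', h1x]
      linear_combination (-2) * hu2 - 2 * hs2
    rw [heq2] at H
    exact H.hasDerivWithinAt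
  have h0 := integral_eq_sub_of_hasDeriv_right_of_le hb.le hcont hderiv (f_integrable hb hb1)
  rw [h0, hF]
  simp only []
  rw [show (2*b - b)/b = 1 by rw [show 2*b-b = b by ring, div_self hb.ne'],
     show (2*0 - b)/b = -1 by rw [show 2*0-b = -b by ring, neg_div, div_self hb.ne']]
  rw [show b*(b-b) = 0 by ring, show (0:ℝ)*(b-0) = 0 by ring, Real.sqrt_zero]
  rw [show ((2-b)*0 - b)/(b*(1-0)) = -1 by rw [show (2-b)*0-b = -b by ring, show b*(1-0) = b by ring, neg_div, div_self hb.ne']]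
  rw [Real.arcsin_one, Real.arcsin_neg_one]
  have hA : Real.sqrt (1-b) * Real.arcsin (((2-b)*b - b)/(b*(1-b))) = Real.sqrt (1-b) * (π/2) := by
    rcases lt_or_eq_of_le hb1 with hlt | heqb
    · rw [show ((2-b)*b - b)/(b*(1-b)) = 1 by
        rw [show (2-b)*b - b = b*(1-b) by ring, div_self (mul_pos hb (by linarith : (0:ℝ) < 1-b)).ne']]
      rw [Real.arcsin_one]
    · have hzero : Real.sqrt (1-b) = 0 := by rw [← heqb]; simp
      rw [hzero, zero_mul, zero_mul]
  rw [hA]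
  ring

lemma moment_formula (θ : ℝ) (hθ0 : 0 < θ) (hθ1 : θ ≤ 1/2) (n' : ℕ) :
    ∫ x in (0:ℝ)..(4*θ*(1-θ)), x^(n'+1) * (Real.sqrt (x*(4*θ*(1-θ) - x))/(2*π*θ*x*(1-x)))
      = 1 - ∑ k ∈ Finset.range (n'+1), (catalan k : ℝ) * θ^k * (1-θ)^(k+1) := by
  set b : ℝ := 4*θ*(1-θ) with hbdef
  have hθ1' : θ < 1 := by linarith
  have hb0 : 0 < b := by rw [hbdef]; nlinarith
  have hb1 : b ≤ 1 := by rw [hbdef]; nlinarith [sq_nonneg (1-2*θ)]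
  have hEq : EqOn (fun x => x^(n'+1) * (Real.sqrt (x*(b - x))/(2*π*θ*x*(1-x))))
      (fun x => 1/(2*π*θ) * (Real.sqrt (x*(b-x))/(1-x)
        - (∑ j ∈ Finset.range n', x^j) * Real.sqrt (x*(b-x)))) (uIcc 0 b) := by
    intro x hx
    rw [uIcc_of_le hb0.le] at hx
    obtain ⟨hx0', hxb'⟩ := hx
    simp only []
    rcases eq_or_lt_of_le hx0' with h0 | h0
    · rw [← h0]
      simp
    · rcases eq_or_lt_of_le hxb' with hbx | hbx
      · rw [hbx, show b - b = 0 by ring, mul_zero, Real.sqrt_zero]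
        simp
      · have hx1 : x < 1 := lt_of_lt_of_le hbx hb1
        have h1x : (1:ℝ) - x ≠ 0 := ne_of_gt (by linarith)
        set S := Real.sqrt (x*(b-x)) with hSdef
        set G := ∑ j ∈ Finset.range n', x^j with hGdef
        have hG : G * (x - 1) = x^n' - 1 := geom_sum_mul x n'
        field_simp [h0.ne', h1x, Real.pi_ne_zero, hθ0.ne']
        linear_combination (-(S*x)) * hG
  rw [intervalIntegral.integral_congr hEq]
  rw [intervalIntegral.integral_const_mul]
  have hsint : IntervalIntegrable (fun x => (∑ j ∈ Finset.range n', x^j) * Real.sqrt (x*(b-x))) volume 0 b :=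
    ((continuous_finset_sum _ fun j _ => continuous_pow j).mul sqrt_cont).intervalIntegrable 0 b
  rw [intervalIntegral.integral_sub (f_integrable hb0 hb1) hsint]
  rw [integral_T hb0 hb1]
  rw [show (fun x => (∑ j ∈ Finset.range n', x^j) * Real.sqrt (x*(b-x)))
      = fun x => ∑ j ∈ Finset.range n', x^j * Real.sqrt (x*(b-x)) from funext fun x => Finset.sum_mul _ _ _]
  rw [intervalIntegral.integral_finset_sum (f := fun j x => x^j * Real.sqrt (x*(b-x)))
    (fun j _ => (((continuous_pow j).mul sqrt_cont).intervalIntegrable 0 b :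
      IntervalIntegrable (fun x => x^j * Real.sqrt (x*(b-x))) volume 0 b))]
  have hIj : ∀ j ∈ Finset.range n', (∫ x in (0:ℝ)..b, x^j * Real.sqrt (x*(b-x)))
      = 2*π*(catalan (j+1) : ℝ)*(b/4)^(j+2) := fun j _ => integral_Iformula hb0 j
  rw [Finset.sum_congr rfl hIj]
  have hsq : Real.sqrt (1-b) = 1-2*θ := by
    rw [show (1:ℝ)-b = (1-2*θ)^2 by rw [hbdef]; ring, Real.sqrt_sq (by linarith)]
  rw [hsq]
  have hterm : ∀ j ∈ Finset.range n',
      1/(2*π*θ) * (2*π*(catalan (j+1) : ℝ)*(b/4)^(j+2)) = (catalan (j+1):ℝ)*θ^(j+1)*(1-θ)^(j+2) := by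
    intro j _
    rw [show b/4 = θ*(1-θ) by rw [hbdef]; ring, mul_pow]
    field_simp [Real.pi_ne_zero, hθ0.ne']
    ring
  rw [mul_sub, Finset.mul_sum, Finset.sum_congr rfl hterm]
  have hfirst : 1/(2*π*θ) * (π*(1 - b/2 - (1-2*θ))) = θ := by
    rw [hbdef]
    field_simp [Real.pi_ne_zero, hθ0.ne']
    ring
  rw [hfirst, Finset.sum_range_succ']
  simp only [catalan_zero, Nat.cast_one, pow_zero]
  ring


/-- For `θ ∈ (0,1/2]`, with `x_+ = 4θ(1-θ)`, `g(x) = √(x(x_+-x))/(2πθ·x(1-x))` and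
moments `m₀ = 1`, `m_n = ∫_0^{x_+} xⁿ g(x) dx` for `n ≥ 1`, one has, for every `n ≥ 1`,
`(1-θ)·m_n = θ·∑_{k=0}^{n-1} m_{n-k-1}(m_k - m_{k+1})`. -/
theorem stmt_12 (θ : ℝ) (hθ0 : 0 < θ) (hθ1 : θ ≤ 1 / 2)
    (xp : ℝ) (hxp : xp = 4 * θ * (1 - θ))
    (g : ℝ → ℝ)
    (hg : ∀ x : ℝ, g x =
      Real.sqrt (x * (xp - x)) / (2 * Real.pi * θ * x * (1 - x)))
    (m : ℕ → ℝ) (hm0 : m 0 = 1)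
    (hm : ∀ n : ℕ, 1 ≤ n → m n = ∫ x in (0:ℝ)..xp, x ^ n * g x) :
    ∀ n : ℕ, 1 ≤ n →
      (1 - θ) * m n = θ * ∑ k ∈ Finset.range n, m (n - k - 1) * (m k - m (k + 1)) := by
  subst hxp
  have hθ1' : θ < 1 := by linarith
  have hθ2 : θ ≤ 1/2 := hθ1
  have hrep : ∀ N : ℕ, m N = 1 - ∑ k ∈ Finset.range N, (catalan k : ℝ) * θ^k * (1-θ)^(k+1) := by
    intro N
    rcases Nat.eq_zero_or_pos N with h | h
    · subst h; simpa using hm0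
    · obtain ⟨n', rfl⟩ : ∃ n', N = n'+1 := ⟨N-1, by omega⟩
      rw [hm _ (by omega), ← moment_formula θ hθ0 hθ2 n']
      apply intervalIntegral.integral_congr
      intro x _
      simp only [hg]
  have hdiff : ∀ k : ℕ, m k - m (k+1) = (catalan k : ℝ) * θ^k * (1-θ)^(k+1) := by
    intro k
    rw [hrep k, hrep (k+1), Finset.sum_range_succ]
    ring
  intro n hn
  induction n with
  | zero => omega
  | succ n ih =>
    rcases Nat.eq_zero_or_pos n with h0 | h0
    · subst h0
      have hm1 : m 1 = θ := by
        rw [hrep 1, Finset.sum_range_one, catalan_zero]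
        push_cast; ring
      rw [Finset.sum_range_one, hm0, hm1]
      norm_num
      ring
    · have IH := ih h0
      have hsum : ∀ k ∈ Finset.range n,
          ((catalan (n-k-1) : ℝ) * θ^(n-k-1) * (1-θ)^(n-k-1+1)) * ((catalan k : ℝ) * θ^k * (1-θ)^(k+1))
            = θ^(n-1) * (1-θ)^(n+1) * ((catalan (n-1-k) : ℝ) * (catalan k : ℝ)) := by
        intro k hk
        have hk' : k < n := Finset.mem_range.mp hk
        have e0 : n-k-1 = n-1-k := by omega
        have e2 : θ^(n-1-k) * θ^k = θ^(n-1) := by rw [← pow_add]; congr 1; omega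
        have e3 : (1-θ)^(n-1-k+1) * (1-θ)^(k+1) = (1-θ)^(n+1) := by rw [← pow_add]; congr 1; omega
        rw [e0]
        calc ((catalan (n-1-k) : ℝ) * θ^(n-1-k) * (1-θ)^(n-1-k+1)) * ((catalan k : ℝ) * θ^k * (1-θ)^(k+1))
            = (θ^(n-1-k) * θ^k) * ((1-θ)^(n-1-k+1) * (1-θ)^(k+1)) * ((catalan (n-1-k) : ℝ) * (catalan k : ℝ)) := by ring
          _ = θ^(n-1) * (1-θ)^(n+1) * ((catalan (n-1-k) : ℝ) * (catalan k : ℝ)) := by rw [e2, e3]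
      have hcatN : catalan n = ∑ k ∈ Finset.range n, catalan k * catalan (n-1-k) := by
        have h := catalan_succ (n-1)
        rw [show (n-1)+1 = n from by omega] at h
        rw [h, Fin.sum_univ_eq_sum_range (fun i => catalan i * catalan ((n-1) - i)) ((n-1).succ)]
        rw [show (n-1).succ = n from by omega]
      have hcat : ∑ k ∈ Finset.range n, (catalan (n-1-k) : ℝ) * (catalan k : ℝ) = (catalan n : ℝ) := by
        have h : (catalan n : ℝ) = ∑ k ∈ Finset.range n, ((catalan k : ℝ) * (catalan (n-1-k) : ℝ)) := by
          exact_mod_cast congrArg (Nat.cast : ℕ → ℝ) hcatN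
        rw [h]
        exact Finset.sum_congr rfl fun k _ => mul_comm _ _
      have hdd : θ * ∑ k ∈ Finset.range n,
          ((catalan (n-k-1) : ℝ) * θ^(n-k-1) * (1-θ)^(n-k-1+1)) * ((catalan k : ℝ) * θ^k * (1-θ)^(k+1))
            = (catalan n : ℝ) * θ^n * (1-θ)^(n+1) := by
        rw [Finset.sum_congr rfl hsum, ← Finset.mul_sum, hcat]
        have e4 : θ * θ^(n-1) = θ^n := by
          rw [← pow_succ']
          congr 1; omega
        calc θ * (θ^(n-1) * (1-θ)^(n+1) * (catalan n : ℝ))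
            = (θ * θ^(n-1)) * (1-θ)^(n+1) * (catalan n : ℝ) := by ring
          _ = θ^n * (1-θ)^(n+1) * (catalan n : ℝ) := by rw [e4]
          _ = (catalan n : ℝ) * θ^n * (1-θ)^(n+1) := by ring
      have hsplit : ∀ k ∈ Finset.range n, m (n+1-k-1) * (m k - m (k+1))
          = m (n-k-1) * (m k - m (k+1))
            - ((catalan (n-k-1):ℝ)*θ^(n-k-1)*(1-θ)^(n-k-1+1)) * ((catalan k:ℝ)*θ^k*(1-θ)^(k+1)) := by
        intro k hk
        have hk' : k < n := Finset.mem_range.mp hk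
        have h1 : n+1-k-1 = (n-k-1)+1 := by omega
        have h2 : m ((n-k-1)+1) = m (n-k-1) - ((catalan (n-k-1):ℝ)*θ^(n-k-1)*(1-θ)^(n-k-1+1)) := by
          have := hdiff (n-k-1); linarith
        rw [h1, h2, hdiff k]
        ring
      rw [Finset.sum_range_succ, Finset.sum_congr rfl hsplit, Finset.sum_sub_distrib]
      have hend : n+1-n-1 = 0 := by omega
      have hmn1 : m (n+1) = m n - ((catalan n:ℝ)*θ^n*(1-θ)^(n+1)) := by
        have := hdiff n; linarith
      rw [hend, hm0, hdiff n, hmn1]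
      linear_combination IH + hdd
end

section
/- For all real numbers 0 < a ≤ b and every integer n ≥ 1, ∫_a^b x^{n-1}·√((b-x)(x-a)) dx = (π(b-a)²/8)·b^{n-1}·∑_{k=0}^{n-1} [ (1-n)_k (3/2)_k / ((3)_k · k!) ]·((b-a)/b)^k, where (c)_k = c(c+1)⋯(c+k-1) denotes the ascending Pochhammer symbol (with (c)_0 = 1). -/
open Real intervalIntegral Finset

lemma hasDerivAt_mul_sqrt {y : ℝ} (hy : 0 ≤ y) :
    HasDerivAt (fun t : ℝ => t * Real.sqrt t) (3/2 * Real.sqrt y) y := by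
  rcases eq_or_lt_of_le hy with h | h
  · subst h
    rw [hasDerivAt_iff_tendsto_slope]
    have hs : ∀ t : ℝ, slope (fun t : ℝ => t * Real.sqrt t) 0 t = Real.sqrt t := by
      intro t
      rcases eq_or_ne t 0 with rfl | ht
      · simp [slope]
      · simp [slope_def_field, ht]
    have : Filter.Tendsto Real.sqrt (nhdsWithin 0 {(0:ℝ)}ᶜ) (nhds (Real.sqrt 0)) :=
      (Real.continuous_sqrt.tendsto 0).mono_left nhdsWithin_le_nhds
    simp only [Real.sqrt_zero] at this
    simpa [funext hs, Real.sqrt_zero] using this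
  · have h1 : HasDerivAt Real.sqrt (1 / (2 * Real.sqrt y)) y :=
      Real.hasDerivAt_sqrt h.ne'
    have := (hasDerivAt_id y).mul h1
    refine this.congr_deriv ?_
    rw [id_eq]
    have hs : Real.sqrt y ≠ 0 := by positivity
    field_simp
    nlinarith [Real.sq_sqrt hy, Real.sqrt_nonneg y]

noncomputable def Jint (m : ℕ) : ℝ := ∫ u in (0:ℝ)..1, u ^ m * Real.sqrt (u * (1 - u))

lemma cont_s : Continuous (fun u : ℝ => Real.sqrt (u * (1 - u))) :=
  Real.continuous_sqrt.comp (by continuity)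

lemma Jint_rec (m : ℕ) : ((m:ℝ) + 3) * Jint (m+1) = ((m:ℝ) + 3/2) * Jint m := by
  have key : ∀ x ∈ Set.uIcc (0:ℝ) 1,
      HasDerivAt (fun x : ℝ => x ^ m * ((x * (1 - x)) * Real.sqrt (x * (1 - x))))
        ((m:ℝ) * x ^ (m-1) * ((x * (1 - x)) * Real.sqrt (x * (1 - x)))
          + x ^ m * (3/2 * Real.sqrt (x * (1 - x)) * (1 - 2*x))) x := by
    intro x hx
    rw [Set.uIcc_of_le (by norm_num)] at hx
    have hg : HasDerivAt (fun x : ℝ => x * (1 - x)) (1 - 2*x) x := by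
      have := (hasDerivAt_id x).mul ((hasDerivAt_const x (1:ℝ)).sub (hasDerivAt_id x))
      refine this.congr_deriv ?_
      simp only [id_eq, Pi.sub_apply]; ring
    have hge : 0 ≤ x * (1 - x) := mul_nonneg hx.1 (by linarith [hx.2])
    have hcomp := (hasDerivAt_mul_sqrt hge).comp x hg
    exact (hasDerivAt_pow m x).mul hcomp
  have h0 := intervalIntegral.integral_eq_sub_of_hasDerivAt key ?_
  · have h0' : (∫ x in (0:ℝ)..1,
        ((m:ℝ) * x ^ (m-1) * ((x * (1 - x)) * Real.sqrt (x * (1 - x)))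
          + x ^ m * (3/2 * Real.sqrt (x * (1 - x)) * (1 - 2*x)))) = 0 := by
      rw [h0]; norm_num
    have heq : ∀ x : ℝ,
        ((m:ℝ) * x ^ (m-1) * ((x * (1 - x)) * Real.sqrt (x * (1 - x)))
          + x ^ m * (3/2 * Real.sqrt (x * (1 - x)) * (1 - 2*x)))
        = ((m:ℝ) + 3/2) * (x ^ m * Real.sqrt (x * (1 - x)))
          - ((m:ℝ) + 3) * (x ^ (m+1) * Real.sqrt (x * (1 - x))) := by
      intro x
      rcases m with _ | m
      · push_cast; ring
      · simp only [Nat.add_sub_cancel]; push_cast; ring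
    rw [intervalIntegral.integral_congr (fun x _ => heq x)] at h0'
    have i1 : IntervalIntegrable (fun x : ℝ => x ^ m * Real.sqrt (x * (1 - x)))
        MeasureTheory.volume 0 1 := ((continuous_pow m).mul cont_s).intervalIntegrable 0 1
    have i2 : IntervalIntegrable (fun x : ℝ => x ^ (m+1) * Real.sqrt (x * (1 - x)))
        MeasureTheory.volume 0 1 := ((continuous_pow (m+1)).mul cont_s).intervalIntegrable 0 1
    rw [intervalIntegral.integral_sub (i1.const_mul _) (i2.const_mul _),
      intervalIntegral.integral_const_mul, intervalIntegral.integral_const_mul] at h0'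
    unfold Jint
    linarith
  · apply Continuous.intervalIntegrable
    apply Continuous.add
    · exact (continuous_const.mul (continuous_pow _)).mul ((by continuity : Continuous fun x:ℝ => x*(1-x)).mul cont_s)
    · exact (continuous_pow _).mul ((continuous_const.mul cont_s).mul (by continuity))

lemma Jint_zero : Jint 0 = π/8 := by
  have h := intervalIntegral.integral_comp_mul_add (a := (-1:ℝ)) (b := 1)
    (f := fun u => Real.sqrt (u * (1-u))) (c := (1/2:ℝ)) (by norm_num) (1/2)
  norm_num at h
  have h2 : ∀ t : ℝ, Real.sqrt ((1/2*t + 1/2) * (1 - (1/2*t + 1/2)))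
      = 1/2 * Real.sqrt (1 - t^2) := by
    intro t
    have : (1/2*t + 1/2) * (1 - (1/2*t + 1/2)) = (1/2)^2 * (1 - t^2) := by ring
    rw [this, Real.sqrt_mul (by positivity), Real.sqrt_sq (by norm_num)]
  simp only [h2] at h
  rw [intervalIntegral.integral_const_mul, integral_sqrt_one_sub_sq] at h
  unfold Jint
  simp only [pow_zero, one_mul]
  linarith

lemma Jint_eq (m : ℕ) :
    Jint m = π/8 * (ascPochhammer ℝ m).eval (3/2) / (ascPochhammer ℝ m).eval 3 := by
  induction m with
  | zero => simp [Jint_zero]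
  | succ m ih =>
    have h3 : (0:ℝ) < (ascPochhammer ℝ m).eval 3 := ascPochhammer_pos m 3 (by norm_num)
    have hr := Jint_rec m
    rw [ih] at hr
    rw [ascPochhammer_succ_eval, ascPochhammer_succ_eval]
    have hm3 : ((m:ℝ) + 3) ≠ 0 := by positivity
    field_simp at hr ⊢
    nlinarith [hr]

lemma asc_neg (m k : ℕ) (hk : k ≤ m) :
    (ascPochhammer ℝ k).eval (-(m:ℝ)) = (-1)^k * (m.descFactorial k) := by
  induction k with
  | zero => simp
  | succ k ih =>
    have hk' : k ≤ m := Nat.le_of_succ_le hk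
    rw [ascPochhammer_succ_eval, ih hk', Nat.descFactorial_succ]
    have : ((m - k : ℕ) : ℝ) = (m:ℝ) - k := by
      rw [Nat.cast_sub hk']
    push_cast [Nat.cast_sub hk']
    ring

lemma Jint_def (m : ℕ) : Jint m = ∫ u in (0:ℝ)..1, u ^ m * Real.sqrt (u * (1 - u)) := rfl

/-- For all reals `0 < a ≤ b` and every integer `n ≥ 1`,
`∫_a^b x^{n-1}·√((b-x)(x-a)) dx
  = (π(b-a)²/8)·b^{n-1}·∑_{k=0}^{n-1} [(1-n)_k (3/2)_k / ((3)_k k!)]·((b-a)/b)^k`,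
where `(c)_k` is the ascending Pochhammer symbol. -/
theorem stmt_16 (a b : ℝ) (ha : 0 < a) (hab : a ≤ b) (n : ℕ) (hn : 1 ≤ n) :
    (∫ x in a..b, x ^ (n - 1) * Real.sqrt ((b - x) * (x - a))) =
      (Real.pi * (b - a) ^ 2 / 8) * b ^ (n - 1) *
        ∑ k ∈ Finset.range n,
          ((ascPochhammer ℝ k).eval (1 - (n : ℝ)) *
              (ascPochhammer ℝ k).eval (3 / 2 : ℝ)) /
            ((ascPochhammer ℝ k).eval (3 : ℝ) * (Nat.factorial k : ℝ)) *
          ((b - a) / b) ^ k := by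
  obtain ⟨m, rfl⟩ : ∃ m, n = m + 1 := ⟨n - 1, (Nat.succ_pred_eq_of_pos hn).symm⟩
  simp only [Nat.add_sub_cancel]
  rcases eq_or_lt_of_le hab with rfl | hlt
  · simp
  have hb : 0 < b := ha.trans_le hab
  have hba : 0 < b - a := sub_pos.2 hlt
  set c : ℝ := (b - a) / b with hc
  have hbc : b * c = b - a := by rw [hc]; field_simp
  -- pointwise form of the substituted integrand
  have hpt : ∀ u : ℝ,
      (-(b-a)*u + b) ^ m * Real.sqrt ((b - (-(b-a)*u + b)) * ((-(b-a)*u + b) - a))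
      = ∑ k ∈ Finset.range (m+1),
          (b ^ m * (b-a) * (m.choose k) * (-c)^k) * (u ^ k * Real.sqrt (u * (1 - u))) := by
    intro u
    have h1 : (b - (-(b-a)*u + b)) * ((-(b-a)*u + b) - a) = (b-a)^2 * (u * (1 - u)) := by
      ring
    have h2 : Real.sqrt ((b-a)^2 * (u * (1-u))) = (b-a) * Real.sqrt (u * (1-u)) := by
      rw [Real.sqrt_mul (sq_nonneg _), Real.sqrt_sq hba.le]
    have h3 : (-(b-a)*u + b) = b * (-(c*u) + 1) := by
      have : b * (c*u) = (b-a) * u := by rw [← mul_assoc, hbc]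
      rw [mul_add, mul_one, mul_neg, this]; ring
    rw [h1, h2, h3, mul_pow, add_pow, Finset.mul_sum, Finset.sum_mul]
    refine Finset.sum_congr rfl fun k hk => ?_
    rw [show -(c*u) = (-c)*u by ring, mul_pow, one_pow]
    ring
  have hsub := intervalIntegral.integral_comp_mul_add (a := (0:ℝ)) (b := 1)
    (f := fun x => x ^ m * Real.sqrt ((b - x) * (x - a))) (c := -(b-a)) (by linarith) b
  simp only [smul_eq_mul] at hsub
  have hLHS : (∫ x in a..b, x ^ m * Real.sqrt ((b - x) * (x - a)))
      = (b-a) * ∫ u in (0:ℝ)..1, ∑ k ∈ Finset.range (m+1),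
          (b ^ m * (b-a) * (m.choose k) * (-c)^k) * (u ^ k * Real.sqrt (u * (1 - u))) := by
    rw [intervalIntegral.integral_symm]
    have hb1 : -(b-a)*0 + b = b := by ring
    have hb2 : -(b-a)*1 + b = a := by ring
    rw [hb1, hb2] at hsub
    have hint : (∫ u in (0:ℝ)..1, ∑ k ∈ Finset.range (m+1),
          (b ^ m * (b-a) * (m.choose k) * (-c)^k) * (u ^ k * Real.sqrt (u * (1 - u))))
        = (-(b-a))⁻¹ * ∫ x in b..a, x ^ m * Real.sqrt ((b - x) * (x - a)) := by
      rw [← hsub]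
      exact intervalIntegral.integral_congr (fun u _ => (hpt u).symm)
    rw [hint, ← mul_assoc]
    field_simp
  rw [hLHS, intervalIntegral.integral_finset_sum (f := fun k u => (b ^ m * (b-a) * (m.choose k) * (-c)^k) * (u ^ k * Real.sqrt (u * (1 - u)))) (fun k _ =>
      (((continuous_pow k).mul cont_s).intervalIntegrable 0 1).const_mul _)]
  simp only [intervalIntegral.integral_const_mul]
  rw [Finset.mul_sum, Finset.mul_sum]
  refine Finset.sum_congr rfl fun k hk => ?_
  rw [Finset.mem_range, Nat.lt_succ_iff] at hk
  have h1n : (1 : ℝ) - ((m:ℝ) + 1) = -(m:ℝ) := by ring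
  push_cast
  rw [h1n, asc_neg m k hk, ← Jint_def, Jint_eq k]
  have h3 : (0:ℝ) < (ascPochhammer ℝ k).eval 3 := ascPochhammer_pos k 3 (by norm_num)
  have hfac : (0:ℝ) < (Nat.factorial k : ℝ) := by positivity
  have hdesc : ((m.descFactorial k : ℕ) : ℝ) = (Nat.factorial k : ℝ) * (m.choose k : ℝ) := by
    rw [Nat.descFactorial_eq_factorial_mul_choose]; push_cast; ring
  rw [hdesc, neg_pow]
  field_simp
end

section
/- For every real z with 0 < z < 1, ∑_{n=0}^{∞} [(3/2)_n/(3)_n]·zⁿ = 8(1 - z/2 - √(1-z))/z², where (c)_n = c(c+1)⋯(c+n-1) is the ascending Pochhammer symbol (with (c)_0 = 1). In particular the series converges. -/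
open Finset

lemma cat_le_four_pow (n : ℕ) : (catalan n : ℝ) ≤ 4 ^ n := by
  have h1 : catalan n ≤ n.centralBinom := by
    rw [catalan_eq_centralBinom_div]; exact Nat.div_le_self _ _
  have h2 : n.centralBinom ≤ 4 ^ n := by
    have : (2 * n).choose n ≤ ∑ i ∈ range (2 * n + 1), (2 * n).choose i :=
      Finset.single_le_sum (fun i _ => Nat.zero_le _) (by simp [Nat.lt_succ_iff]; omega)
    calc n.centralBinom = (2 * n).choose n := rfl
      _ ≤ 2 ^ (2 * n) := by rw [← Nat.sum_range_choose]; exact this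
      _ = 4 ^ n := by rw [pow_mul]; norm_num
  calc (catalan n : ℝ) ≤ (n.centralBinom : ℝ) := by exact_mod_cast h1
    _ ≤ ((4 ^ n : ℕ) : ℝ) := by exact_mod_cast h2
    _ = 4 ^ n := by push_cast; ring

lemma summable_cat {t : ℝ} (h0 : 0 ≤ t) (h : t < 1 / 4) :
    Summable (fun n : ℕ => (catalan n : ℝ) * t ^ n) := by
  have hg : Summable (fun n : ℕ => (4 * t) ^ n) :=
    summable_geometric_of_lt_one (by linarith) (by linarith)
  refine Summable.of_nonneg_of_le (fun n => ?_) (fun n => ?_) hg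
  · have : (0:ℝ) ≤ (catalan n : ℝ) := Nat.cast_nonneg _; positivity
  · rw [mul_pow]
    exact mul_le_mul_of_nonneg_right (cat_le_four_pow n) (by positivity)

noncomputable def F (t : ℝ) : ℝ := ∑' n : ℕ, (catalan n : ℝ) * t ^ n

lemma hasSum_F {t : ℝ} (h0 : 0 ≤ t) (h : t < 1 / 4) :
    HasSum (fun n : ℕ => (catalan n : ℝ) * t ^ n) (F t) :=
  (summable_cat h0 h).hasSum

lemma catalan_succ_real (n : ℕ) :
    (catalan (n + 1) : ℝ) = ∑ k ∈ range (n + 1), (catalan k : ℝ) * (catalan (n - k) : ℝ) := by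
  have := catalan_succ' n
  rw [Finset.Nat.sum_antidiagonal_eq_sum_range_succ_mk] at this
  exact_mod_cast congrArg (Nat.cast : ℕ → ℝ) this

lemma hasSum_F_sq {t : ℝ} (h0 : 0 ≤ t) (h : t < 1 / 4) :
    HasSum (fun n : ℕ => (catalan (n + 1) : ℝ) * t ^ n) (F t ^ 2) := by
  have hs : Summable fun n : ℕ => ‖(catalan n : ℝ) * t ^ n‖ := by
    have : (fun n : ℕ => ‖(catalan n : ℝ) * t ^ n‖) = fun n : ℕ => (catalan n : ℝ) * t ^ n :=
      funext fun n => abs_of_nonneg (by positivity)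
    rw [this]; exact summable_cat h0 h
  have hc := hasSum_sum_range_mul_of_summable_norm hs hs
  have hFt : F t ^ 2 = (∑' n : ℕ, (catalan n : ℝ) * t ^ n) * ∑' n : ℕ, (catalan n : ℝ) * t ^ n := by
    rw [F, sq]
  rw [← hFt] at hc
  convert hc using 2 with n
  · exact rfl
  rw [catalan_succ_real, Finset.sum_mul]
  refine Finset.sum_congr rfl fun k hk => ?_
  have hkn : k ≤ n := Nat.lt_succ_iff.1 (Finset.mem_range.1 hk)
  rw [mul_assoc, mul_assoc, mul_comm (t ^ k), mul_assoc, ← pow_add,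
    Nat.sub_add_cancel hkn]

lemma quad {x : ℝ} (h0 : 0 ≤ x) (h : x < 1 / 4) : x * F x ^ 2 - F x + 1 = 0 := by
  have h1 := hasSum_F h0 h
  have h3 : HasSum (fun n : ℕ => (catalan (n + 1) : ℝ) * x ^ (n + 1)) (x * F x ^ 2) := by
    have h2 := (hasSum_F_sq h0 h).mul_left x
    convert h2 using 2 with n; · exact rfl
    ring
  have h4 := (hasSum_nat_add_iff' (f := fun n : ℕ => (catalan n : ℝ) * x ^ n) 1).2 h1
  simp only [Finset.range_one, Finset.sum_singleton, catalan_zero, Nat.cast_one, pow_zero,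
    mul_one, one_mul] at h4
  have := h3.unique h4
  linarith

lemma F_zero : F 0 = 1 := by
  have : HasSum (fun n : ℕ => (catalan n : ℝ) * (0 : ℝ) ^ n) 1 := by
    convert hasSum_ite_eq 0 (1 : ℝ) using 1
    ext n
    cases n <;> simp
  rw [F, this.tsum_eq]

lemma F_ne_two {x : ℝ} (h0 : 0 ≤ x) (h : x < 1 / 4) : F x ≠ 2 := by
  intro he
  have := quad h0 h
  rw [he] at this
  nlinarith

lemma F_lt_two {x : ℝ} (h0 : 0 ≤ x) (h : x < 1 / 4) : F x < 2 := by
  rcases lt_or_gt_of_ne (F_ne_two h0 h) with h' | h'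
  · exact h'
  exfalso
  have hc : ContinuousOn F (Set.Icc 0 x) := by
    apply continuousOn_tsum (u := fun n : ℕ => (catalan n : ℝ) * x ^ n)
    · intro i; exact (continuous_const.mul (continuous_pow i)).continuousOn
    · exact summable_cat h0 h
    · intro n t ht
      rw [Real.norm_eq_abs, abs_mul, abs_of_nonneg (Nat.cast_nonneg _), abs_pow,
        abs_of_nonneg ht.1]
      exact mul_le_mul_of_nonneg_left (pow_le_pow_left₀ ht.1 ht.2 n) (Nat.cast_nonneg _)
  have h2 : (2 : ℝ) ∈ Set.Icc (F 0) (F x) := by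
    rw [F_zero]; constructor <;> [norm_num; linarith]
  obtain ⟨t, ht, hft⟩ := intermediate_value_Icc h0 hc h2
  exact F_ne_two ht.1 (lt_of_le_of_lt ht.2 h) hft

lemma F_eq {x : ℝ} (h0 : 0 < x) (h : x < 1 / 4) :
    F x = (1 - Real.sqrt (1 - 4 * x)) / (2 * x) := by
  set s := Real.sqrt (1 - 4 * x) with hsdef
  have hs2 : s ^ 2 = 1 - 4 * x := Real.sq_sqrt (by linarith)
  have hspos : 0 < s := Real.sqrt_pos.2 (by linarith)
  have hslt : s < 1 := by nlinarith
  have hq := quad h0.le h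
  have key : (2 * x * F x - (1 - s)) * (2 * x * F x - (1 + s)) = 0 := by
    linear_combination 4 * x * hq - hs2
  rcases mul_eq_zero.1 key with h1 | h1
  · rw [eq_div_iff (by linarith)]
    linarith
  · exfalso
    have hF : F x = (1 + s) / (2 * x) := by
      rw [eq_div_iff (by linarith)]; linarith
    have h2 : 2 * (2 * x) < 1 + s := by nlinarith
    have h3 : 2 < F x := by
      rw [hF, lt_div_iff₀ (by linarith)]
      linarith
    linarith [F_lt_two h0.le h]

lemma catalan_rec_real (n : ℕ) :
    ((n : ℝ) + 3) * (catalan (n + 2) : ℝ) = 2 * (2 * (n : ℝ) + 3) * (catalan (n + 1) : ℝ) := by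
  have h1 := succ_mul_catalan_eq_centralBinom (n + 2)
  have h2 := succ_mul_catalan_eq_centralBinom (n + 1)
  have h3 := Nat.succ_mul_centralBinom_succ (n + 1)
  have e : (n + 2) * ((n + 2 + 1) * catalan (n + 2)) = (n + 2) * (2 * (2 * n + 3) * catalan (n + 1)) := by
    rw [h1, h3, ← h2]; ring_nf
  have e2 : (n + 2 + 1) * catalan (n + 2) = 2 * (2 * n + 3) * catalan (n + 1) :=
    Nat.eq_of_mul_eq_mul_left (by omega) e
  have := congrArg (Nat.cast : ℕ → ℝ) e2
  push_cast at this
  linarith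

lemma key_ratio (n : ℕ) :
    (ascPochhammer ℝ n).eval (3 / 2 : ℝ) * 4 ^ n =
      (catalan (n + 1) : ℝ) * (ascPochhammer ℝ n).eval (3 : ℝ) := by
  induction n with
  | zero => simp
  | succ n ih =>
    rw [ascPochhammer_succ_eval, ascPochhammer_succ_eval, pow_succ]
    have hc := catalan_rec_real n
    simp only [show n + 1 + 1 = n + 2 from rfl]
    linear_combination ((3 / 2 + (n : ℝ)) * 4) * ih +
      (-(Polynomial.eval (3:ℝ) (ascPochhammer ℝ n))) * hc

/-- For every real `0 < z < 1`, the series `∑_{n≥0} [(3/2)_n/(3)_n]·zⁿ` converges and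
equals `8(1 - z/2 - √(1-z))/z²`, where `(c)_n` is the ascending Pochhammer symbol. -/
theorem stmt_18 (z : ℝ) (hz0 : 0 < z) (hz1 : z < 1) :
    HasSum
      (fun n : ℕ =>
        (ascPochhammer ℝ n).eval (3 / 2 : ℝ) / (ascPochhammer ℝ n).eval (3 : ℝ) * z ^ n)
      (8 * (1 - z / 2 - Real.sqrt (1 - z)) / z ^ 2) := by
  set x := z / 4 with hx
  have hx0 : 0 < x := by positivity
  have hx1 : x < 1 / 4 := by rw [hx]; linarith
  have h1 := hasSum_F hx0.le hx1
  have h4 := (hasSum_nat_add_iff' (f := fun n : ℕ => (catalan n : ℝ) * x ^ n) 1).2 h1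
  simp only [Finset.range_one, Finset.sum_singleton, catalan_zero, Nat.cast_one, pow_zero,
    mul_one, one_mul] at h4
  -- h4 : HasSum (fun n => catalan (n+1) * x^(n+1)) (F x - 1)
  have h5 := h4.mul_left (4 / z)
  have hterm : (fun n : ℕ => 4 / z * ((catalan (n + 1) : ℝ) * x ^ (n + 1))) =
      fun n : ℕ =>
        (ascPochhammer ℝ n).eval (3 / 2 : ℝ) / (ascPochhammer ℝ n).eval (3 : ℝ) * z ^ n := by
    funext n
    have hpos : (0 : ℝ) < (ascPochhammer ℝ n).eval (3 : ℝ) :=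
      ascPochhammer_pos n (3 : ℝ) (by norm_num)
    have hk := key_ratio n
    rw [hx]
    have h4n : (0:ℝ) < 4 ^ n := by positivity
    rw [div_pow]
    field_simp
    linear_combination (-4 * z ^ (n + 1)) * hk
  rw [hterm] at h5
  have hval : 4 / z * (F x - 1) = 8 * (1 - z / 2 - Real.sqrt (1 - z)) / z ^ 2 := by
    rw [F_eq hx0 hx1, hx]
    have : 1 - 4 * (z / 4) = 1 - z := by ring
    rw [this]
    field_simp
    ring
  rw [hval] at h5
  exact h5
end
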